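/- arXiv:2204.04599 — 11 statements merged into one kernel-verified Lean document; each statement's English description precedes it below -/
import Mathlib

section
/- Let N, P, k, L, γ be real numbers with 0 < P, P ≤ N, k > 0, L > 0, P ≤ k·L, and 0 < γ ≤ 3·k·N/P. Set s := 3·P/(γ·L) and assume s ≤ 1. Then 1 − (1 − s)^{N/P} ≥ P/(2·k·L), where the exponentiation is real-number power (rpow). -/
/-- Analytic core of the "phase 1 progress" lemma (Histogram Partitioning):
if `k ≥ p / log* p` splitters are unachieved, each key in a splitter's target
interval is sampled with probability `s = 3P/(γL)`, and the probability at least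
one of the `N/P` keys is sampled is at least `P/(2kL)`. -/
theorem phase1_progress_core (N P k L γ : ℝ)
    (hP : 0 < P) (hPN : P ≤ N) (hk : 0 < k) (hL : 0 < L)
    (hPkL : P ≤ k * L) (hγ0 : 0 < γ) (hγ : γ ≤ 3 * k * N / P)
    (s : ℝ) (hs : s = 3 * P / (γ * L)) (hs1 : s ≤ 1) :
    1 - (1 - s) ^ (N / P) ≥ P / (2 * k * L) := by
  have hN : 0 < N := lt_of_lt_of_le hP hPN
  have hs0 : 0 < s := by rw [hs]; positivity
  set x := N / P with hx
  have hx1 : (1 : ℝ) ≤ x := (one_le_div hP).mpr hPN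
  have hx0 : (0 : ℝ) ≤ x := by linarith
  set t := s * x with ht
  have ht0 : 0 < t := mul_pos hs0 (by linarith)
  have hγP : γ * P ≤ 3 * k * N := (le_div_iff₀ hP).mp hγ
  have htlb : P / (k * L) ≤ t := by
    rw [ht, hs, hx, div_mul_div_comm, div_le_div_iff₀ (by positivity) (by positivity)]
    nlinarith [mul_le_mul_of_nonneg_right hγP (by positivity : (0:ℝ) ≤ L * P)]
  have hebound : (1 - s) ^ x ≤ Real.exp (-t) := by
    have h1 : 1 - s ≤ Real.exp (-s) := by linarith [Real.add_one_le_exp (-s)]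
    calc (1 - s) ^ x ≤ (Real.exp (-s)) ^ x :=
          Real.rpow_le_rpow (by linarith) h1 hx0
      _ = Real.exp (-t) := by rw [← Real.exp_mul, ht, neg_mul]
  have hhalf : P / (2 * k * L) ≤ 1 / 2 := by
    rw [div_le_div_iff₀ (by positivity) (by norm_num : (0:ℝ) < 2)]
    nlinarith
  have hkey : Real.exp (-t) ≤ 1 - P / (2 * k * L) := by
    rcases le_total t 1 with hle | hge
    · have hinv : Real.exp (-t) ≤ 1 / (1 + t) := by
        rw [Real.exp_neg, inv_eq_one_div]
        apply one_div_le_one_div_of_le (by linarith)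
        linarith [Real.add_one_le_exp t]
      have h2 : 1 / (1 + t) ≤ 1 - t / 2 := by
        rw [div_le_iff₀ (by linarith)]
        nlinarith
      have h3 : P / (2 * k * L) ≤ t / 2 := by
        have : P / (2 * k * L) = (P / (k * L)) / 2 := by ring
        rw [this]
        linarith
      linarith
    · have h1 : Real.exp (-t) ≤ Real.exp (-1) := Real.exp_le_exp.mpr (by linarith)
      have h2 : Real.exp (-1) ≤ 1 / 2 := by
        rw [Real.exp_neg, inv_eq_one_div]
        apply one_div_le_one_div_of_le (by norm_num)
        linarith [Real.add_one_le_exp 1]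
      linarith
  linarith
end

section
/- Let N > 0 be a real number, P ≥ 1 a natural number, and set w := N/P. Let [a₁,b₁],…,[a_t,b_t] be pairwise disjoint closed intervals contained in [0, N] with a_j ≤ b_j for each j, and let k be a natural number. Assume: (i) for each j there exists an integer l with [l·w, (l+1)·w] ⊆ [a_j, b_j]; and (ii) the number of integers l such that [l·w, (l+1)·w] ⊆ ⋃_j [a_j, b_j] is at most k. Then Σ_{j=1}^t (b_j − a_j) ≤ 3·k·w. -/
/-- Geometric content of the "sampleable length" lemma: pairwise disjoint closed
intervals inside `[0, N]`, each containing a grid interval `[l·w, (l+1)·w]`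
(`w = N/P`), such that at most `k` grid intervals are contained in their union,
have total length at most `3·k·w`. -/
theorem sampleable_length (N : ℝ) (hN : 0 < N) (P : ℕ) (hP : 1 ≤ P)
    (w : ℝ) (hw : w = N / P)
    (t : ℕ) (a b : Fin t → ℝ)
    (hab : ∀ j, a j ≤ b j)
    (hsub : ∀ j, Set.Icc (a j) (b j) ⊆ Set.Icc (0 : ℝ) N)
    (hdisj : ∀ i j, i ≠ j → Disjoint (Set.Icc (a i) (b i)) (Set.Icc (a j) (b j)))
    (k : ℕ)
    (hcontain : ∀ j, ∃ l : ℤ, Set.Icc ((l : ℝ) * w) ((l + 1 : ℝ) * w) ⊆ Set.Icc (a j) (b j))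
    (hcount : {l : ℤ | Set.Icc ((l : ℝ) * w) ((l + 1 : ℝ) * w) ⊆
        ⋃ j, Set.Icc (a j) (b j)}.ncard ≤ k) :
    ∑ j, (b j - a j) ≤ 3 * k * w := by
  have hP0 : (0:ℝ) < P := by
    have : 0 < P := lt_of_lt_of_le one_pos hP
    exact_mod_cast this
  have hwpos : 0 < w := by rw [hw]; exact div_pos hN hP0
  have hNw : N = P * w := by rw [hw]; field_simp
  set T : Set ℤ := {l : ℤ | Set.Icc ((l : ℝ) * w) ((l + 1 : ℝ) * w) ⊆
      ⋃ j, Set.Icc (a j) (b j)} with hT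
  set S : Fin t → Set ℤ := fun j =>
    {l : ℤ | Set.Icc ((l : ℝ) * w) ((l + 1 : ℝ) * w) ⊆ Set.Icc (a j) (b j)} with hS
  have hST : ∀ j, S j ⊆ T := fun j l hl => hl.trans (Set.subset_iUnion _ j)
  have hTsub : T ⊆ Set.Icc (0:ℤ) ((P:ℤ) - 1) := by
    intro l hl
    have h1 : Set.Icc ((l : ℝ) * w) ((l + 1 : ℝ) * w) ⊆ Set.Icc (0:ℝ) N :=
      hl.trans (Set.iUnion_subset hsub)
    have hmemlo : (l:ℝ) * w ∈ Set.Icc ((l : ℝ) * w) ((l + 1 : ℝ) * w) :=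
      ⟨le_refl _, by nlinarith⟩
    have hmemhi : ((l:ℝ) + 1) * w ∈ Set.Icc ((l : ℝ) * w) ((l + 1 : ℝ) * w) :=
      ⟨by nlinarith, le_refl _⟩
    have h2 := h1 hmemlo
    have h3 := h1 hmemhi
    constructor
    · by_contra h
      push_neg at h
      have hl0 : (l:ℝ) < 0 := by exact_mod_cast h
      nlinarith [h2.1]
    · have hle : ((l:ℝ) + 1) * w ≤ (P:ℝ) * w := by rw [← hNw]; exact h3.2
      have : (l:ℝ) + 1 ≤ (P:ℝ) := le_of_mul_le_mul_right hle hwpos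
      have : (l:ℤ) + 1 ≤ (P:ℤ) := by exact_mod_cast this
      omega
  have hTfin : T.Finite := (Set.finite_Icc _ _).subset hTsub
  have hSfin : ∀ j, (S j).Finite := fun j => hTfin.subset (hST j)
  -- each interval has length ≤ 3 * (number of grid intervals it contains) * w
  have key : ∀ j, b j - a j ≤ 3 * ((S j).ncard : ℝ) * w := by
    intro j
    set c := ⌈a j / w⌉ with hc
    set f := ⌊b j / w⌋ with hf
    have hsub' : ((Finset.Icc c (f - 1) : Finset ℤ) : Set ℤ) ⊆ S j := by
      intro l hl
      simp only [Finset.coe_Icc, Set.mem_Icc] at hl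
      have h1 : a j ≤ (l:ℝ) * w := by
        have hcl : (c:ℝ) ≤ (l:ℝ) := by exact_mod_cast hl.1
        have := (Int.le_ceil (a j / w)).trans hcl
        exact (div_le_iff₀ hwpos).mp this
      have h2 : ((l:ℝ) + 1) * w ≤ b j := by
        have hlf : (l:ℝ) + 1 ≤ (f:ℝ) := by
          have : l + 1 ≤ f := by omega
          exact_mod_cast this
        have := hlf.trans (Int.floor_le (b j / w))
        exact (le_div_iff₀ hwpos).mp this
      exact Set.Icc_subset_Icc h1 h2
    have hcard : (f - c).toNat ≤ (S j).ncard := by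
      have := Set.ncard_le_ncard hsub' (hSfin j)
      rwa [Set.ncard_coe_finset, Int.card_Icc, show f - 1 + 1 - c = f - c by ring] at this
    have hne : 1 ≤ (S j).ncard := by
      obtain ⟨l, hl⟩ := hcontain j
      have : (S j).Nonempty := ⟨l, hl⟩
      exact (Set.ncard_pos (hSfin j)).mpr this
    have hbf : b j < ((f:ℝ) + 1) * w := by
      have := Int.lt_floor_add_one (b j / w)
      calc b j = (b j / w) * w := by field_simp
        _ < ((f:ℝ) + 1) * w := by nlinarith
    have haf : ((c:ℝ) - 1) * w < a j := by
      have := Int.ceil_lt_add_one (a j / w)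
      calc ((c:ℝ) - 1) * w < (a j / w) * w := by nlinarith
        _ = a j := by field_simp
    have hfc : (f:ℝ) - c ≤ ((S j).ncard : ℝ) := by
      have h1 : f - c ≤ ((f - c).toNat : ℤ) := Int.self_le_toNat _
      have h2 : ((f - c).toNat : ℤ) ≤ ((S j).ncard : ℤ) := by exact_mod_cast hcard
      have := h1.trans h2
      exact_mod_cast this
    have hm1 : (1:ℝ) ≤ ((S j).ncard : ℝ) := by exact_mod_cast hne
    nlinarith
  -- sum of counts is at most k
  have hsum_card : ∑ j, (S j).ncard ≤ k := by
    set F : Fin t → Finset ℤ := fun j => (hSfin j).toFinset with hF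
    have hdisjF : ∀ i ∈ (Finset.univ : Finset (Fin t)), ∀ j ∈ Finset.univ,
        i ≠ j → Disjoint (F i) (F j) := by
      intro i _ j _ hij
      rw [Finset.disjoint_left]
      intro l hli hlj
      have hli' : l ∈ S i := by simpa [hF] using hli
      have hlj' : l ∈ S j := by simpa [hF] using hlj
      have hnonempty : (Set.Icc ((l : ℝ) * w) ((l + 1 : ℝ) * w)).Nonempty := by
        rw [Set.nonempty_Icc]; nlinarith
      have := Set.disjoint_left.mp (hdisj i j hij) (hli' hnonempty.some_mem)
          (hlj' hnonempty.some_mem)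
      exact this
    have hunion_sub : Finset.univ.biUnion F ⊆ hTfin.toFinset := by
      intro l hl
      rw [Finset.mem_biUnion] at hl
      obtain ⟨j, _, hj⟩ := hl
      have : l ∈ S j := by simpa [hF] using hj
      exact hTfin.mem_toFinset.mpr (hST j this)
    calc ∑ j, (S j).ncard = ∑ j, (F j).card := by
          refine Finset.sum_congr rfl fun j _ => ?_
          rw [hF]; exact Set.ncard_eq_toFinset_card _ (hSfin j)
      _ = (Finset.univ.biUnion F).card := (Finset.card_biUnion hdisjF).symm
      _ ≤ hTfin.toFinset.card := Finset.card_le_card hunion_sub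
      _ = T.ncard := (Set.ncard_eq_toFinset_card _ hTfin).symm
      _ ≤ k := hcount
  calc ∑ j, (b j - a j) ≤ ∑ j, 3 * ((S j).ncard : ℝ) * w :=
        Finset.sum_le_sum fun j _ => key j
    _ = 3 * ((∑ j, (S j).ncard : ℕ) : ℝ) * w := by
        push_cast
        rw [Finset.mul_sum, Finset.sum_mul]
    _ ≤ 3 * (k : ℝ) * w := by
        have : ((∑ j, (S j).ncard : ℕ) : ℝ) ≤ (k : ℝ) := by exact_mod_cast hsum_card
        nlinarith
end

section
/- Let C, Q, s be natural numbers with C ≥ 1, Q ≥ 2 and 4·s ≤ C·Q. Let S be a finite set with |S| = C·Q, let B ⊆ S with |B| = C, and let A be a uniform random s-subset of S. Then P(A ∩ B = ∅) ≥ exp(−4·s/Q). -/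
open Finset

lemma exp_neg_three_le (x : ℝ) (hx0 : 0 ≤ x) (hx : x ≤ 2/3) :
    Real.exp (-(3*x)) ≤ 1 - x := by
  have h1 : 1 + 3*x ≤ Real.exp (3*x) := by linarith [Real.add_one_le_exp (3*x)]
  have h2 : (0:ℝ) < 1 + 3*x := by linarith
  have h3 : Real.exp (-(3*x)) ≤ (1+3*x)⁻¹ := by
    rw [Real.exp_neg]
    exact inv_anti₀ h2 h1
  have h4 : (1+3*x)⁻¹ ≤ 1 - x := by
    rw [inv_le_iff_one_le_mul₀ h2]
    nlinarith
  linarith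

lemma key (C Q : ℕ) (hC : 1 ≤ C) (hQ : 2 ≤ Q) :
    ∀ s : ℕ, 4 * s ≤ C * Q →
      Real.exp (-(4 * (s:ℝ)) / Q) ≤ (((C*Q - C).choose s : ℝ)) / (((C*Q).choose s : ℝ)) := by
  intro s
  induction s with
  | zero => intro _; simp
  | succ s ih =>
    intro hs1
    have hs : 4 * s ≤ C * Q := by omega
    have hQ0 : (0:ℝ) < Q := by positivity
    set n := C * Q with hn
    have hsltm : s + 1 ≤ n - C := by
      have h1 : 4 * C ≤ 3 * n := by
        calc 4 * C ≤ 3 * (C * 2) := by omega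
          _ ≤ 3 * (C * Q) := Nat.mul_le_mul_left 3 (Nat.mul_le_mul_left C hQ)
          _ = 3 * n := by rw [hn]
      omega
    have hsn : s + 1 ≤ n := by omega
    -- choose positivity
    have hc1 : 0 < (n - C).choose s := Nat.choose_pos (by omega)
    have hc2 : 0 < n.choose s := Nat.choose_pos (by omega)
    have hc3 : 0 < (n - C).choose (s+1) := Nat.choose_pos hsltm
    have hc4 : 0 < n.choose (s+1) := Nat.choose_pos hsn
    -- step equalities
    have e1 : (n.choose (s+1) : ℝ) * (s+1) = (n.choose s : ℝ) * (n - s : ℕ) := by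
      exact_mod_cast congrArg (Nat.cast : ℕ → ℝ) (Nat.choose_succ_right_eq n s)
    have e2 : ((n - C).choose (s+1) : ℝ) * (s+1) = ((n - C).choose s : ℝ) * ((n - C) - s : ℕ) := by
      exact_mod_cast congrArg (Nat.cast : ℕ → ℝ) (Nat.choose_succ_right_eq (n - C) s)
    -- key real facts about the ratio step
    have hns : ((n - s : ℕ) : ℝ) = (n:ℝ) - s := by
      have : s ≤ n := by omega
      push_cast [Nat.cast_sub this]; ring
    have hms : (((n - C) - s : ℕ) : ℝ) = (n:ℝ) - C - s := by
      have h1 : C ≤ n := Nat.le_mul_of_pos_right C (by omega)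
      have h2 : s ≤ n - C := by omega
      push_cast [Nat.cast_sub h2, Nat.cast_sub h1]; ring
    have hnspos : (0:ℝ) < (n:ℝ) - s := by
      have h : (s:ℝ) < n := by exact_mod_cast (by omega : s < n)
      linarith
    -- the single-step exp bound
    have hstep : Real.exp (-(4:ℝ)/Q) ≤ ((n:ℝ) - C - s) / ((n:ℝ) - s) := by
      set x : ℝ := (C:ℝ) / ((n:ℝ) - s) with hx
      have hCpos : (0:ℝ) < C := by positivity
      have hx0 : 0 ≤ x := by positivity
      -- 3CQ ≤ 4(n - s)
      have hkey : 3 * (C:ℝ) * Q ≤ 4 * ((n:ℝ) - s) := by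
        have hk : 3 * n + 4 * s + 4 ≤ 4 * n := by omega
        have hcast : 3 * (n:ℝ) + 4 * s + 4 ≤ 4 * n := by exact_mod_cast hk
        have hnr : (n:ℝ) = C * Q := by exact_mod_cast hn
        nlinarith
      have hx23 : x ≤ 2/3 := by
        rw [hx, div_le_iff₀ hnspos]
        have hQ2 : (2:ℝ) ≤ Q := by exact_mod_cast hQ
        nlinarith
      have h3x : 3 * x ≤ 4 / Q := by
        have h1 : (3 * C) / ((n:ℝ) - s) ≤ 4 / Q := by
          rw [div_le_div_iff₀ hnspos hQ0]
          nlinarith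
        have h2 : 3 * x = (3 * C) / ((n:ℝ) - s) := by rw [hx]; ring
        linarith
      calc Real.exp (-(4:ℝ)/Q) ≤ Real.exp (-(3*x)) := by
            apply Real.exp_le_exp.mpr; rw [neg_div]; linarith
        _ ≤ 1 - x := exp_neg_three_le x hx0 hx23
        _ = ((n:ℝ) - C - s) / ((n:ℝ) - s) := by
            rw [hx]
            field_simp
            ring
    -- assemble
    have hratio : (((n - C).choose (s+1) : ℝ)) / ((n.choose (s+1) : ℝ))
        = (((n - C).choose s : ℝ)) / ((n.choose s : ℝ)) * (((n:ℝ) - C - s) / ((n:ℝ) - s)) := by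
      rw [← hms, ← hns]
      have hnc4 : ((n.choose (s+1) : ℝ)) ≠ 0 := by positivity
      have hnc2 : ((n.choose s : ℝ)) ≠ 0 := by positivity
      have hns0 : (((n - s : ℕ)):ℝ) ≠ 0 := by rw [hns]; linarith
      rw [div_mul_div_comm, div_eq_div_iff (by positivity) (by
        exact mul_ne_zero hnc2 hns0)]
      linear_combination ((n.choose (s+1) : ℝ)) * e2 - (((n - C).choose (s+1) : ℝ)) * e1
    rw [hratio]
    have hexp : Real.exp (-(4 * ((s:ℝ)+1)) / Q) = Real.exp (-(4*(s:ℝ))/Q) * Real.exp (-(4:ℝ)/Q) := by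
      rw [← Real.exp_add]; ring_nf
    have hih := ih hs
    have hpos1 : 0 ≤ Real.exp (-(4*(s:ℝ))/Q) := le_of_lt (Real.exp_pos _)
    have hpos2 : 0 ≤ ((n:ℝ) - C - s) / ((n:ℝ) - s) := le_trans (le_of_lt (Real.exp_pos _)) hstep
    calc Real.exp (-(4 * ((s+1:ℕ):ℝ)) / Q) = Real.exp (-(4*(s:ℝ))/Q) * Real.exp (-(4:ℝ)/Q) := by
          push_cast; rw [← hexp]
      _ ≤ (((n - C).choose s : ℝ)) / ((n.choose s : ℝ)) * (((n:ℝ) - C - s) / ((n:ℝ) - s)) := by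
          apply mul_le_mul hih hstep (le_of_lt (Real.exp_pos _)) (le_trans hpos1 hih)

/-- Probabilistic core of Lemma `LemmaOneInterval`: sampling a uniform random
`s`-subset `A` of a set `S` of `C·Q` subintervals (with `4s ≤ CQ`, `Q ≥ 2`), a
fixed block `B` of `C` subintervals is entirely unsampled with probability at
least `exp(−4s/Q)`. The probability is expressed as a counting ratio over the
uniform distribution on `s`-element subsets of `S`. -/
theorem one_interval_unsampled {α : Type*} [DecidableEq α]
    (C Q s : ℕ) (hC : 1 ≤ C) (hQ : 2 ≤ Q) (hs : 4 * s ≤ C * Q)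
    (S : Finset α) (hScard : S.card = C * Q)
    (B : Finset α) (hBsub : B ⊆ S) (hBcard : B.card = C) :
    Real.exp (-(4 * (s : ℝ)) / (Q : ℝ)) ≤
      (((S.powersetCard s).filter (fun A => A ∩ B = ∅)).card : ℝ) /
        ((S.powersetCard s).card : ℝ) := by
  have hfilter : (S.powersetCard s).filter (fun A => A ∩ B = ∅) = (S \ B).powersetCard s := by
    ext A
    simp only [mem_filter, mem_powersetCard, subset_sdiff]
    constructor
    · rintro ⟨⟨h1, h2⟩, h3⟩
      exact ⟨⟨h1, Finset.disjoint_iff_inter_eq_empty.mpr h3⟩, h2⟩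
    · rintro ⟨⟨h1, h2⟩, h3⟩
      exact ⟨⟨h1, h3⟩, Finset.disjoint_iff_inter_eq_empty.mp h2⟩
  rw [hfilter, Finset.card_powersetCard, Finset.card_powersetCard,
    Finset.card_sdiff_of_subset hBsub, hScard, hBcard]
  exact key C Q hC hQ s hs
end

section
/- For all natural numbers m, n, s with n ≤ m and 2·s ≤ m − n, the following inequality of real numbers holds: (m−s)^{(n)} / m^{(n)} ≥ exp(−2·s·n/(m−n)), where the quotient is taken in ℝ. -/
/-- Key falling-factorial estimate of the lower-bound section: for `n ≤ m` and
`2s ≤ m − n`, the probability `(m−s)^(n) / m^(n)` that `n` fixed items are all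
unsampled when `s` of `m` items are sampled without replacement is at least
`exp(−2sn/(m−n))`. Here `a^(j)` is the falling factorial (`Nat.descFactorial`). -/
theorem descFactorial_ratio_ge (m n s : ℕ) (hn : n ≤ m) (hs : 2 * s ≤ m - n) :
    Real.exp (-(2 * (s : ℝ) * (n : ℝ)) / ((m : ℝ) - (n : ℝ))) ≤
      ((m - s).descFactorial n : ℝ) / (m.descFactorial n : ℝ) := by
  have hdpos : 0 < (m.descFactorial n : ℝ) := by
    exact_mod_cast Nat.pos_of_ne_zero fun h => absurd (Nat.descFactorial_eq_zero_iff_lt.mp h) (by omega)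
  rcases Nat.eq_zero_or_pos s with rfl | hspos
  · simp [div_self hdpos.ne']
  -- now s ≥ 1, so m - n ≥ 2
  have hnm : n < m := by omega
  have hsnm : s + n ≤ m := by omega
  have hmn : (n : ℝ) < m := by exact_mod_cast hnm
  have hmnpos : (0:ℝ) < (m:ℝ) - n := by linarith
  have hx2 : 2 * (s:ℝ) ≤ (m:ℝ) - n := by
    have : ((2*s : ℕ) : ℝ) ≤ ((m - n : ℕ) : ℝ) := by exact_mod_cast hs
    rwa [Nat.cast_mul, Nat.cast_two, Nat.cast_sub hn] at this
  set x : ℝ := (s:ℝ) / ((m:ℝ) - n) with hxdef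
  have hx0 : 0 ≤ x := div_nonneg (by positivity) hmnpos.le
  have hx12 : x ≤ 1/2 := by
    rw [hxdef, div_le_iff₀ hmnpos]; linarith
  have hxs : x * ((m:ℝ) - n) = s := by
    rw [hxdef]; field_simp
  -- per-factor bound
  have key : ∀ i ∈ Finset.range n,
      Real.exp (-(2 * (s:ℝ)) / ((m:ℝ) - n)) ≤ ((m:ℝ) - s - i) / ((m:ℝ) - i) := by
    intro i hi
    have hi' : i < n := Finset.mem_range.mp hi
    have hin : (i:ℝ) < n := by exact_mod_cast hi'
    have hmipos : (0:ℝ) < (m:ℝ) - i := by linarith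
    have stepA : Real.exp (-(2 * (s:ℝ)) / ((m:ℝ) - n)) ≤ 1 - x := by
      have heq : -(2 * (s:ℝ)) / ((m:ℝ) - n) = -(2 * x) := by
        rw [hxdef]; ring
      rw [heq]
      have hE := Real.add_one_le_exp (2 * x)
      have hmul : Real.exp (-(2*x)) * Real.exp (2*x) = 1 := by
        rw [← Real.exp_add]; norm_num
      nlinarith [Real.exp_pos (-(2*x)), Real.exp_pos (2*x)]
    have stepB : 1 - x ≤ ((m:ℝ) - s - i) / ((m:ℝ) - i) := by
      rw [le_div_iff₀ hmipos]
      have hle : x * ((m:ℝ) - n) ≤ x * ((m:ℝ) - i) :=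
        mul_le_mul_of_nonneg_left (by linarith) hx0
      nlinarith
    linarith
  -- rewrite descFactorials as products
  have h1 : ((m - s).descFactorial n : ℝ) = ∏ i ∈ Finset.range n, ((m:ℝ) - s - i) := by
    rw [Nat.descFactorial_eq_prod_range, Nat.cast_prod]
    refine Finset.prod_congr rfl fun i hi => ?_
    have hi' : i < n := Finset.mem_range.mp hi
    rw [Nat.cast_sub (by omega : i ≤ m - s), Nat.cast_sub (by omega : s ≤ m)]
  have h2 : (m.descFactorial n : ℝ) = ∏ i ∈ Finset.range n, ((m:ℝ) - i) := by
    rw [Nat.descFactorial_eq_prod_range, Nat.cast_prod]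
    refine Finset.prod_congr rfl fun i hi => ?_
    have hi' : i < n := Finset.mem_range.mp hi
    rw [Nat.cast_sub (by omega : i ≤ m)]
  rw [h1, h2, ← Finset.prod_div_distrib]
  calc Real.exp (-(2 * (s:ℝ) * n) / ((m:ℝ) - n))
      = Real.exp (-(2 * (s:ℝ)) / ((m:ℝ) - n)) ^ n := by
        rw [← Real.exp_nat_mul]; congr 1; ring
    _ = ∏ _i ∈ Finset.range n, Real.exp (-(2 * (s:ℝ)) / ((m:ℝ) - n)) := by
        rw [Finset.prod_const, Finset.card_range]
    _ ≤ ∏ i ∈ Finset.range n, ((m:ℝ) - s - i) / ((m:ℝ) - i) :=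
        Finset.prod_le_prod (fun i _ => (Real.exp_pos _).le) key
end

section
/- Let S be a finite set, let B₁,…,B_Q be pairwise disjoint nonempty subsets of S, let s be a natural number with s ≤ |S|, and let A be a uniform random s-subset of S. Then P(A ∩ B_i ≠ ∅ for all i = 1,…,Q) ≤ ∏_{i=1}^Q P(A ∩ B_i ≠ ∅). -/
open Finset

section Aux
variable {α : Type*} [DecidableEq α]

/-- Step in sample size for a monotone predicate: double counting. -/
lemma step_s (p : Finset α → Prop) [DecidablePred p]
    (hp : ∀ ⦃A A'⦄, A ⊆ A' → p A → p A') (T : Finset α) (k : ℕ) :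
    ((T.powersetCard k).filter p).card * (T.card - k) ≤
      ((T.powersetCard (k+1)).filter p).card * (k+1) := by
  refine card_mul_le_card_mul (fun A A' => A ⊆ A') ?_ ?_
  · intro A hA
    rw [mem_filter, mem_powersetCard] at hA
    obtain ⟨⟨hAT, hAk⟩, hpA⟩ := hA
    have hcard : (T \ A).card = T.card - k := by rw [card_sdiff_of_subset hAT, hAk]
    have himg : ((T \ A).image (fun x => insert x A)) ⊆
        (((T.powersetCard (k+1)).filter p).bipartiteAbove (fun A A' => A ⊆ A') A) := by
      intro A' hA'
      simp only [mem_image] at hA'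
      obtain ⟨x, hx, rfl⟩ := hA'
      rw [mem_sdiff] at hx
      rw [bipartiteAbove, mem_filter, mem_filter, mem_powersetCard]
      exact ⟨⟨⟨insert_subset hx.1 hAT, by rw [card_insert_of_notMem hx.2, hAk]⟩,
        hp (subset_insert _ _) hpA⟩, subset_insert _ _⟩
    have hinj : ((T \ A).image (fun x => insert x A)).card = (T \ A).card := by
      apply card_image_of_injOn
      intro x hx y hy hxy
      rw [Finset.mem_coe, mem_sdiff] at hx hy
      simp only at hxy
      have : x ∈ insert y A := hxy ▸ mem_insert_self x A
      rcases mem_insert.1 this with h | h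
      · exact h
      · exact absurd h hx.2
    calc T.card - k = ((T \ A).image (fun x => insert x A)).card := by rw [hinj, hcard]
      _ ≤ _ := card_le_card himg
  · intro A' hA'
    rw [mem_filter, mem_powersetCard] at hA'
    have hsub : (((T.powersetCard k).filter p).bipartiteBelow (fun A A' => A ⊆ A') A')
        ⊆ A'.powersetCard k := by
      intro A hA
      rw [bipartiteBelow, mem_filter, mem_filter, mem_powersetCard] at hA
      rw [mem_powersetCard]
      exact ⟨hA.2, hA.1.1.2⟩
    calc _ ≤ (A'.powersetCard k).card := card_le_card hsub
      _ = (k+1).choose k := by rw [card_powersetCard, hA'.1.2]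
      _ = k + 1 := Nat.choose_succ_self_right k

/-- Probability of a monotone predicate is monotone in the sample size. -/
lemma prob_mono_s (p : Finset α → Prop) [DecidablePred p]
    (hp : ∀ ⦃A A'⦄, A ⊆ A' → p A → p A') (T : Finset α) (k : ℕ) :
    ((T.powersetCard k).filter p).card * T.card.choose (k+1) ≤
      ((T.powersetCard (k+1)).filter p).card * T.card.choose k := by
  have h1 := step_s p hp T k
  have key : ((T.powersetCard k).filter p).card * T.card.choose (k+1) * (k+1) ≤
      ((T.powersetCard (k+1)).filter p).card * T.card.choose k * (k+1) := by
    calc ((T.powersetCard k).filter p).card * T.card.choose (k+1) * (k+1)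
        = ((T.powersetCard k).filter p).card * (T.card.choose (k+1) * (k+1)) := by ring
      _ = ((T.powersetCard k).filter p).card * (T.card.choose k * (T.card - k)) := by
          rw [Nat.choose_succ_right_eq]
      _ = ((T.powersetCard k).filter p).card * (T.card - k) * T.card.choose k := by ring
      _ ≤ ((T.powersetCard (k+1)).filter p).card * (k+1) * T.card.choose k :=
          Nat.mul_le_mul_right _ h1
      _ = ((T.powersetCard (k+1)).filter p).card * T.card.choose k * (k+1) := by ring
  exact Nat.le_of_mul_le_mul_right key (Nat.succ_pos k)

/-- Splitting the count over membership of an irrelevant element. -/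
lemma split_count (p : Finset α → Prop) [DecidablePred p] {T : Finset α} {x : α}
    (hx : x ∈ T) (hinv : ∀ A, p (insert x A) ↔ p A) (k : ℕ) :
    ((T.powersetCard (k+1)).filter p).card =
      (((T.erase x).powersetCard (k+1)).filter p).card +
        (((T.erase x).powersetCard k).filter p).card := by
  have hsplit := Finset.card_filter_add_card_filter_not
    (s := (T.powersetCard (k+1)).filter p) (p := fun A => x ∈ A)
  have h1 : (((T.powersetCard (k+1)).filter p).filter (fun A => x ∉ A)) =
      ((T.erase x).powersetCard (k+1)).filter p := by
    ext A
    simp only [mem_filter, mem_powersetCard, subset_erase]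
    tauto
  have h2 : (((T.powersetCard (k+1)).filter p).filter (fun A => x ∈ A)).card =
      (((T.erase x).powersetCard k).filter p).card := by
    apply card_bij (fun A _ => A.erase x)
    · intro A hA
      simp only [mem_filter, mem_powersetCard] at hA ⊢
      obtain ⟨⟨⟨hAT, hAc⟩, hpA⟩, hxA⟩ := hA
      refine ⟨⟨erase_subset_erase _ hAT, by rw [card_erase_of_mem hxA, hAc]; rfl⟩, ?_⟩
      rw [← hinv, insert_erase hxA]; exact hpA
    · intro A hA A' hA' h
      simp only [mem_filter] at hA hA'
      rw [← insert_erase hA.2, h, insert_erase hA'.2]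
    · intro A' hA'
      simp only [mem_filter, mem_powersetCard, subset_erase] at hA'
      obtain ⟨⟨⟨hsub, hxA'⟩, hcard⟩, hpA'⟩ := hA'
      refine ⟨insert x A', ?_, ?_⟩
      · simp only [mem_filter, mem_powersetCard]
        exact ⟨⟨⟨insert_subset hx hsub, by rw [card_insert_of_notMem hxA', hcard]⟩,
          (hinv A').2 hpA'⟩, mem_insert_self x A'⟩
      · rw [erase_insert hxA']
  have h1' := congrArg Finset.card h1
  omega

/-- Removing one irrelevant element from the ground set increases hitting prob. -/
lemma remove_one (p : Finset α → Prop) [DecidablePred p]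
    (hp : ∀ ⦃A A'⦄, A ⊆ A' → p A → p A') {T : Finset α} {x : α}
    (hx : x ∈ T) (hinv : ∀ A, p (insert x A) ↔ p A) (s : ℕ) :
    ((T.powersetCard s).filter p).card * ((T.erase x).card.choose s) ≤
      (((T.erase x).powersetCard s).filter p).card * (T.card.choose s) := by
  cases s with
  | zero => simp
  | succ k =>
    have hcard : T.card = (T.erase x).card + 1 := (card_erase_add_one hx).symm
    have hpascal : T.card.choose (k+1) =
        (T.erase x).card.choose k + (T.erase x).card.choose (k+1) := by
      rw [hcard]; rfl
    rw [split_count p hx hinv k, hpascal]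
    have hmono := prob_mono_s p hp (T.erase x) k
    set a := (((T.erase x).powersetCard (k+1)).filter p).card
    set b := (((T.erase x).powersetCard k).filter p).card
    set c0 := (T.erase x).card.choose k
    set c1 := (T.erase x).card.choose (k+1)
    calc (a + b) * c1 = a * c1 + b * c1 := by ring
      _ ≤ a * c1 + a * c0 := Nat.add_le_add_left hmono _
      _ = a * (c0 + c1) := by ring

/-- Removing a set of irrelevant elements from the ground set. -/
lemma remove_set (p : Finset α → Prop) [DecidablePred p]
    (hp : ∀ ⦃A A'⦄, A ⊆ A' → p A → p A') (T : Finset α) (D : Finset α)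
    (hD : D ⊆ T) (hinv : ∀ x ∈ D, ∀ A, p (insert x A) ↔ p A) (s : ℕ) :
    ((T.powersetCard s).filter p).card * ((T \ D).card.choose s) ≤
      (((T \ D).powersetCard s).filter p).card * (T.card.choose s) := by
  induction D using Finset.induction_on with
  | empty => simp
  | @insert x D hxD ih =>
    have hxT : x ∈ T \ D := by
      rw [mem_sdiff]
      exact ⟨hD (mem_insert_self x D), hxD⟩
    have hD' : D ⊆ T := (subset_insert x D).trans hD
    have h1 := ih hD' (fun y hy A => hinv y (mem_insert_of_mem hy) A)
    have h2 := remove_one p hp hxT (hinv x (mem_insert_self x D)) s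
    rw [Finset.sdiff_insert]
    set E := T \ D
    rcases Nat.eq_zero_or_pos (E.card.choose s) with h0 | hpos
    · have : (E.erase x).card.choose s = 0 := by
        apply Nat.choose_eq_zero_of_lt
        have := Nat.choose_eq_zero_iff.mp h0
        have hle : (E.erase x).card ≤ E.card := card_le_card (erase_subset x E)
        omega
      rw [this, Nat.mul_zero]
      exact Nat.zero_le _
    · refine Nat.le_of_mul_le_mul_right ?_ hpos
      calc ((T.powersetCard s).filter p).card * (E.erase x).card.choose s * E.card.choose s
          = ((T.powersetCard s).filter p).card * E.card.choose s * (E.erase x).card.choose s := by ring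
        _ ≤ ((E.powersetCard s).filter p).card * T.card.choose s * (E.erase x).card.choose s :=
            Nat.mul_le_mul_right _ h1
        _ = ((E.powersetCard s).filter p).card * (E.erase x).card.choose s * T.card.choose s := by ring
        _ ≤ (((E.erase x).powersetCard s).filter p).card * E.card.choose s * T.card.choose s :=
            Nat.mul_le_mul_right _ h2
        _ = (((E.erase x).powersetCard s).filter p).card * T.card.choose s * E.card.choose s := by ring

/-- Sets missing `E` are exactly subsets of `T \ E`. -/
lemma miss_count (p : Finset α → Prop) [DecidablePred p] (T E : Finset α) (s : ℕ) :
    (T.powersetCard s).filter (fun A => p A ∧ A ∩ E = ∅) =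
      ((T \ E).powersetCard s).filter p := by
  ext A
  simp only [mem_filter, mem_powersetCard, subset_sdiff, ← disjoint_iff_inter_eq_empty]
  tauto

/-- Key negative correlation step (in natural numbers). -/
lemma key_step {Q : ℕ} (B : Fin Q → Finset α) (S : Finset α)
    (hBsub : ∀ i, B i ⊆ S)
    (hdisj : ∀ i j, i ≠ j → Disjoint (B i) (B j))
    (s : ℕ) (t : Finset (Fin Q)) (a : Fin Q) (ha : a ∉ t) :
    ((S.powersetCard s).filter (fun A => ∀ i ∈ insert a t, (A ∩ B i).Nonempty)).card *
        (S.card.choose s) ≤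
      ((S.powersetCard s).filter (fun A => ∀ i ∈ t, (A ∩ B i).Nonempty)).card *
        ((S.powersetCard s).filter (fun A => (A ∩ B a).Nonempty)).card := by
  classical
  set p : Finset α → Prop := fun A => ∀ i ∈ t, (A ∩ B i).Nonempty with hp_def
  have hpmono : ∀ ⦃A A'⦄, A ⊆ A' → p A → p A' := by
    intro A A' hAA hA i hi
    exact (hA i hi).mono (inter_subset_inter hAA Subset.rfl)
  have hinv : ∀ x ∈ B a, ∀ A, p (insert x A) ↔ p A := by
    intro x hxBa A
    constructor
    · intro h i hi
      have hxBi : x ∉ B i :=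
        Finset.disjoint_left.mp (hdisj a i (fun h => ha (h ▸ hi))) hxBa
      have := h i hi
      rwa [insert_inter_of_notMem hxBi] at this
    · intro h i hi
      exact (h i hi).mono (inter_subset_inter (subset_insert _ _) Subset.rfl)
  -- counts
  set g := ((S.powersetCard s).filter (fun A => ∀ i ∈ insert a t, (A ∩ B i).Nonempty)).card
  set h := ((S.powersetCard s).filter p).card
  set f := ((S.powersetCard s).filter (fun A => (A ∩ B a).Nonempty)).card
  set C := S.card.choose s
  set M := (((S \ B a).powersetCard s).filter p).card
  set M0 := ((S \ B a).powersetCard s).card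
  -- (1) g + M = h
  have hg : g + M = h := by
    have e1 : (S.powersetCard s).filter (fun A => ∀ i ∈ insert a t, (A ∩ B i).Nonempty) =
        ((S.powersetCard s).filter p).filter (fun A => (A ∩ B a).Nonempty) := by
      rw [filter_filter]
      apply filter_congr
      intro A _
      simp only [forall_mem_insert, hp_def]
      tauto
    have e2 : ((S.powersetCard s).filter p).filter (fun A => ¬(A ∩ B a).Nonempty) =
        ((S \ B a).powersetCard s).filter p := by
      rw [filter_filter, ← miss_count p S (B a) s]
      apply filter_congr
      intro A _
      simp only [not_nonempty_iff_eq_empty]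
    have := Finset.card_filter_add_card_filter_not
      (s := (S.powersetCard s).filter p) (p := fun A => (A ∩ B a).Nonempty)
    have e1' := congrArg Finset.card e1
    have e2' := congrArg Finset.card e2
    omega
  -- (2) f + M0 = C
  have hf : f + M0 = C := by
    have e2 : (S.powersetCard s).filter (fun A => ¬(A ∩ B a).Nonempty) =
        (S \ B a).powersetCard s := by
      ext A
      simp only [mem_filter, mem_powersetCard, subset_sdiff, not_nonempty_iff_eq_empty,
        ← disjoint_iff_inter_eq_empty]
      tauto
    have := Finset.card_filter_add_card_filter_not
      (s := S.powersetCard s) (p := fun A => (A ∩ B a).Nonempty)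
    have e2' := congrArg Finset.card e2
    have hCeq : (S.powersetCard s).card = C := card_powersetCard _ _
    omega
  -- (3) h * M0 ≤ M * C
  have hM0 : M0 = (S \ B a).card.choose s := card_powersetCard _ _
  have hrem := remove_set p hpmono S (B a) (hBsub a) hinv s
  rw [← hM0] at hrem
  -- conclude: g * C ≤ h * f
  have key : g * M0 ≤ M * f := by
    have expand : g * M0 + M * M0 ≤ M * f + M * M0 := by
      calc g * M0 + M * M0 = (g + M) * M0 := by ring
        _ = h * M0 := by rw [hg]
        _ ≤ M * C := hrem
        _ = M * (f + M0) := by rw [hf]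
        _ = M * f + M * M0 := by ring
    omega
  calc g * C = g * (f + M0) := by rw [hf]
    _ = g * f + g * M0 := by ring
    _ ≤ g * f + M * f := Nat.add_le_add_left key _
    _ = (g + M) * f := by ring
    _ = h * f := by rw [hg]

end Aux

/-- Negative dependence for sampling without replacement (Lemma `LemmaContSeq`):
for a uniform random `s`-subset `A` of `S` and pairwise disjoint nonempty blocks
`B₁,…,B_Q ⊆ S`, the probability that every block is hit is at most the product
of the individual hitting probabilities. Probabilities are counting ratios over
the uniform distribution on `s`-element subsets of `S`. -/
theorem negative_dependence_blocks {α : Type*} [DecidableEq α]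
    (S : Finset α) (Q : ℕ) (B : Fin Q → Finset α)
    (hBsub : ∀ i, B i ⊆ S) (hBne : ∀ i, (B i).Nonempty)
    (hdisj : ∀ i j, i ≠ j → Disjoint (B i) (B j))
    (s : ℕ) (hs : s ≤ S.card) :
    (((S.powersetCard s).filter (fun A => ∀ i, (A ∩ B i).Nonempty)).card : ℝ) /
        ((S.powersetCard s).card : ℝ) ≤
      ∏ i : Fin Q,
        (((S.powersetCard s).filter (fun A => (A ∩ B i).Nonempty)).card : ℝ) /
          ((S.powersetCard s).card : ℝ) := by
  classical
  have hCpos : (0 : ℝ) < ((S.powersetCard s).card : ℝ) := by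
    rw [card_powersetCard]
    exact_mod_cast Nat.choose_pos hs
  set C : ℝ := ((S.powersetCard s).card : ℝ)
  have hCeq : (S.powersetCard s).card = S.card.choose s := card_powersetCard _ _
  have main : ∀ t : Finset (Fin Q),
      (((S.powersetCard s).filter (fun A => ∀ i ∈ t, (A ∩ B i).Nonempty)).card : ℝ) / C ≤
        ∏ i ∈ t,
          (((S.powersetCard s).filter (fun A => (A ∩ B i).Nonempty)).card : ℝ) / C := by
    intro t
    induction t using Finset.induction_on with
    | empty =>
      simp only [notMem_empty, false_implies, implies_true, prod_empty, filter_true_of_mem,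
        fun A _ => trivial]
      rw [div_self (ne_of_gt hCpos)]
    | @insert a t ha ih =>
      have hkey := key_step B S hBsub hdisj s t a ha
      rw [← hCeq] at hkey
      set g := ((S.powersetCard s).filter (fun A => ∀ i ∈ insert a t, (A ∩ B i).Nonempty)).card
      set h := ((S.powersetCard s).filter (fun A => ∀ i ∈ t, (A ∩ B i).Nonempty)).card
      set f := ((S.powersetCard s).filter (fun A => (A ∩ B a).Nonempty)).card
      have hreal : (g : ℝ) * C ≤ (h : ℝ) * (f : ℝ) := by
        have := hkey
        push_cast [C]
        exact_mod_cast this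
      have h1 : (g : ℝ) / C ≤ ((h : ℝ) / C) * ((f : ℝ) / C) := by
        rw [div_mul_div_comm, div_le_div_iff₀ hCpos (by positivity)]
        calc (g : ℝ) * (C * C) = (g : ℝ) * C * C := by ring
          _ ≤ (h : ℝ) * (f : ℝ) * C := by
              exact mul_le_mul_of_nonneg_right hreal (le_of_lt hCpos)
          _ = (h : ℝ) * f * C := by ring
      rw [prod_insert ha]
      calc (g : ℝ) / C ≤ ((h : ℝ) / C) * ((f : ℝ) / C) := h1
        _ ≤ (∏ i ∈ t, (((S.powersetCard s).filter
              (fun A => (A ∩ B i).Nonempty)).card : ℝ) / C) * ((f : ℝ) / C) :=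
            mul_le_mul_of_nonneg_right ih (by positivity)
        _ = ((f : ℝ) / C) * ∏ i ∈ t, (((S.powersetCard s).filter
              (fun A => (A ∩ B i).Nonempty)).card : ℝ) / C := by ring
  have := main Finset.univ
  simpa only [mem_univ, true_implies] using this
end

section
/- Let C, Q, s be natural numbers with C ≥ 1, Q ≥ 2 and 4·s ≤ C·Q. Let S be a finite set with |S| = C·Q, partitioned into pairwise disjoint blocks B₁,…,B_Q each of size C, and let A be a uniform random s-subset of S. Then P(A ∩ B_i ≠ ∅ for all i = 1,…,Q) ≤ (1 − exp(−4·s/Q))^Q. -/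
open Finset

-- Step: monotone (under insertion) predicates have increasing counts on slices.
private lemma hit_step_mono {α : Type*} [DecidableEq α] (T : Finset α)
    (P : Finset α → Prop) [DecidablePred P]
    (hP : ∀ ⦃A⦄ (x : α), P A → P (insert x A)) (k : ℕ) :
    ((T.powersetCard k).filter P).card * (T.card - k) ≤
      ((T.powersetCard (k+1)).filter P).card * (k+1) := by
  classical
  apply Finset.card_mul_le_card_mul (fun A B => A ⊆ B)
  · intro A hA
    simp only [mem_filter, mem_powersetCard] at hA
    obtain ⟨⟨hAT, hAcard⟩, hPA⟩ := hA
    have hsub : ((T \ A).image (fun x => insert x A)) ⊆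
        Finset.bipartiteAbove (fun A B => A ⊆ B) ((T.powersetCard (k+1)).filter P) A := by
      intro X hX
      simp only [mem_image, mem_sdiff] at hX
      obtain ⟨x, ⟨hxT, hxA⟩, rfl⟩ := hX
      simp only [Finset.bipartiteAbove, mem_filter, mem_powersetCard]
      exact ⟨⟨⟨insert_subset hxT hAT, by rw [card_insert_of_notMem hxA, hAcard]⟩, hP x hPA⟩,
        subset_insert _ _⟩
    have hcard : ((T \ A).image (fun x => insert x A)).card = T.card - k := by
      rw [card_image_of_injOn, card_sdiff_of_subset hAT, hAcard]
      intro x hx y hy hxy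
      simp only [coe_sdiff, Set.mem_diff, mem_coe] at hx hy
      simp only at hxy
      have : x ∈ insert y A := by rw [← hxy]; exact mem_insert_self _ _
      rcases mem_insert.1 this with h | h
      · exact h
      · exact absurd h hx.2
    calc T.card - k = ((T \ A).image (fun x => insert x A)).card := hcard.symm
      _ ≤ _ := card_le_card hsub
  · intro X hX
    simp only [mem_filter, mem_powersetCard] at hX
    have hsub : Finset.bipartiteBelow (fun A B => A ⊆ B) ((T.powersetCard k).filter P) X ⊆
        X.powersetCard k := by
      intro A hA
      simp only [Finset.bipartiteBelow, mem_filter, mem_powersetCard] at hA ⊢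
      exact ⟨hA.2, hA.1.1.2⟩
    calc _ ≤ (X.powersetCard k).card := card_le_card hsub
      _ = (k+1).choose k := by rw [card_powersetCard, hX.1.2]
      _ = k+1 := Nat.choose_succ_self_right k

private lemma hit_ratio_mono {α : Type*} [DecidableEq α] (T : Finset α)
    (P : Finset α → Prop) [DecidablePred P]
    (hP : ∀ ⦃A⦄ (x : α), P A → P (insert x A)) {k s : ℕ} (hks : k ≤ s) (hsT : s ≤ T.card) :
    ((T.powersetCard k).filter P).card * (T.card.choose s) ≤
      ((T.powersetCard s).filter P).card * (T.card.choose k) := by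
  induction s, hks using Nat.le_induction with
  | base => exact le_rfl
  | succ j hkj ih =>
    have hjT : j < T.card := hsT
    have ih' := ih hjT.le
    have hstep := hit_step_mono T P hP j
    have hch : T.card.choose (j+1) * (j+1) = T.card.choose j * (T.card - j) :=
      Nat.choose_succ_right_eq _ _
    have key : ((T.powersetCard k).filter P).card * (T.card.choose (j+1)) * (j+1) ≤
        ((T.powersetCard (j+1)).filter P).card * (T.card.choose k) * (j+1) := by
      calc ((T.powersetCard k).filter P).card * (T.card.choose (j+1)) * (j+1)
          = ((T.powersetCard k).filter P).card * (T.card.choose j) * (T.card - j) := by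
            rw [mul_assoc, hch, mul_assoc]
        _ ≤ ((T.powersetCard j).filter P).card * (T.card.choose k) * (T.card - j) :=
            Nat.mul_le_mul_right _ ih'
        _ = ((T.powersetCard j).filter P).card * (T.card - j) * (T.card.choose k) := by ring
        _ ≤ ((T.powersetCard (j+1)).filter P).card * (j+1) * (T.card.choose k) :=
            Nat.mul_le_mul_right _ hstep
        _ = ((T.powersetCard (j+1)).filter P).card * (T.card.choose k) * (j+1) := by ring
    exact Nat.le_of_mul_le_mul_right key (Nat.succ_pos j)

private lemma hit_fiber_card {α : Type*} [DecidableEq α] (S' R : Finset α)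
    (hd : Disjoint S' R) (P : Finset α → Prop) [DecidablePred P] (s : ℕ)
    (A' : Finset α) (hA'sub : A' ⊆ S') (hA'P : P A') (hk : A'.card ≤ s)
    (hPdep : ∀ A, P A ↔ P (A ∩ S')) :
    ((((S' ∪ R).powersetCard s).filter P).filter (fun A => A ∩ S' = A')).card
      = R.card.choose (s - A'.card) := by
  classical
  rw [← Finset.card_powersetCard]
  apply Finset.card_bij' (fun A _ => A \ S') (fun A'' _ => A' ∪ A'')
  · intro A hA
    simp only [mem_filter, mem_powersetCard] at hA
    obtain ⟨⟨⟨hAsub, hAcard⟩, _⟩, hfib⟩ := hA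
    simp only [mem_powersetCard]
    constructor
    · intro x hx
      simp only [mem_sdiff] at hx
      rcases mem_union.1 (hAsub hx.1) with h | h
      · exact absurd h hx.2
      · exact h
    · have := Finset.card_inter_add_card_sdiff A S'
      rw [hfib] at this
      omega
  · intro A'' hA''
    simp only [mem_powersetCard] at hA''
    obtain ⟨hA''sub, hA''card⟩ := hA''
    have hdisjA : Disjoint A' A'' := (hd.mono hA'sub hA''sub)
    have hinter : (A' ∪ A'') ∩ S' = A' := by
      rw [union_inter_distrib_right]
      have h1 : A' ∩ S' = A' := inter_eq_left.2 hA'sub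
      have h2 : A'' ∩ S' = ∅ := by
        rw [← disjoint_iff_inter_eq_empty]
        exact (hd.symm.mono_left hA''sub)
      rw [h1, h2, union_empty]
    simp only [mem_filter, mem_powersetCard]
    refine ⟨⟨⟨union_subset (hA'sub.trans subset_union_left)
        (hA''sub.trans subset_union_right), ?_⟩, ?_⟩, hinter⟩
    · rw [card_union_of_disjoint hdisjA, hA''card]
      omega
    · rw [hPdep, hinter]; exact hA'P
  · intro A hA
    simp only [mem_filter, mem_powersetCard] at hA
    rw [← hA.2]
    ext x
    simp only [mem_union, mem_inter, mem_sdiff]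
    tauto
  · intro A'' hA''
    simp only [mem_powersetCard] at hA''
    ext x
    simp only [mem_sdiff, mem_union]
    constructor
    · rintro ⟨h | h, hns⟩
      · exact absurd (hA'sub h) hns
      · exact h
    · intro hx
      refine ⟨Or.inr hx, fun hxS => ?_⟩
      exact Finset.disjoint_left.1 (hd.symm.mono_left hA''.1) hx hxS

private lemma hit_decomp {α : Type*} [DecidableEq α] (S' R : Finset α)
    (hd : Disjoint S' R) (P : Finset α → Prop) [DecidablePred P]
    (hPdep : ∀ A, P A ↔ P (A ∩ S')) (s : ℕ) :
    (((S' ∪ R).powersetCard s).filter P).card =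
      ∑ k ∈ Finset.range (s+1), ((S'.powersetCard k).filter P).card * R.card.choose (s - k) := by
  classical
  set t : Finset (Finset α) := (Finset.range (s+1)).biUnion
      (fun k => (S'.powersetCard k).filter P) with ht
  have hmaps : ∀ A ∈ ((S' ∪ R).powersetCard s).filter P, A ∩ S' ∈ t := by
    intro A hA
    simp only [mem_filter, mem_powersetCard] at hA
    simp only [ht, mem_biUnion, mem_range, mem_filter, mem_powersetCard]
    refine ⟨(A ∩ S').card, ?_, ⟨inter_subset_right, rfl⟩, (hPdep A).1 hA.2⟩
    have : (A ∩ S').card ≤ A.card := card_le_card inter_subset_left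
    omega
  rw [Finset.card_eq_sum_card_fiberwise hmaps, ht, Finset.sum_biUnion]
  · apply Finset.sum_congr rfl
    intro k hk
    rw [Finset.sum_congr rfl (fun A' hA' => ?_), Finset.sum_const, smul_eq_mul]
    simp only [mem_filter, mem_powersetCard] at hA'
    rw [hit_fiber_card S' R hd P s A' hA'.1.1 hA'.2 (by rw [hA'.1.2]; exact Nat.lt_succ_iff.1 (mem_range.1 hk)) hPdep, hA'.1.2]
  · intro i hi j hj hij
    apply Finset.disjoint_left.2
    intro A hAi hAj
    simp only [mem_filter, mem_powersetCard, mem_coe] at hAi hAj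
    exact hij (by rw [← hAi.1.2, ← hAj.1.2])

private lemma hit_ground_mono {α : Type*} [DecidableEq α] (S' R : Finset α)
    (hd : Disjoint S' R) (P : Finset α → Prop) [DecidablePred P]
    (hPdep : ∀ A, P A ↔ P (A ∩ S'))
    (hP : ∀ ⦃A⦄ (x : α), P A → P (insert x A)) (s : ℕ) (hsm : s ≤ S'.card) :
    (((S' ∪ R).powersetCard s).filter P).card * S'.card.choose s ≤
      ((S'.powersetCard s).filter P).card * (S' ∪ R).card.choose s := by
  rw [hit_decomp S' R hd P hPdep s, card_union_of_disjoint hd, Nat.add_choose_eq,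
    Finset.Nat.sum_antidiagonal_eq_sum_range_succ_mk, Finset.sum_mul, Finset.mul_sum]
  apply Finset.sum_le_sum
  intro k hk
  have hks : k ≤ s := Nat.lt_succ_iff.1 (Finset.mem_range.1 hk)
  have hmono := hit_ratio_mono S' P hP hks hsm
  calc ((S'.powersetCard k).filter P).card * R.card.choose (s - k) * S'.card.choose s
      = ((S'.powersetCard k).filter P).card * S'.card.choose s * R.card.choose (s - k) := by ring
    _ ≤ ((S'.powersetCard s).filter P).card * S'.card.choose k * R.card.choose (s - k) :=
        Nat.mul_le_mul_right _ hmono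
    _ = ((S'.powersetCard s).filter P).card * (S'.card.choose k * R.card.choose (s - k)) := by ring

private lemma exp_le_beta {Q : ℕ} (hQ : 2 ≤ Q) :
    Real.exp (-4 / Q) ≤ 1 - 4 / (3 * (Q : ℝ)) := by
  have hQ0 : (0:ℝ) < Q := by positivity
  have hQ2 : (2:ℝ) ≤ Q := by exact_mod_cast hQ
  have h1 : (0:ℝ) < 1 + 4 / Q := by positivity
  have hexp : Real.exp (-4 / Q) * (1 + 4 / Q) ≤ 1 := by
    have h2 : (1 : ℝ) + 4 / Q ≤ Real.exp (4 / Q) := by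
      have := Real.add_one_le_exp (4 / (Q:ℝ)); linarith
    calc Real.exp (-4 / Q) * (1 + 4 / Q) ≤ Real.exp (-4 / Q) * Real.exp (4 / Q) :=
          mul_le_mul_of_nonneg_left h2 (Real.exp_nonneg _)
      _ = 1 := by rw [← Real.exp_add, neg_div, neg_add_cancel, Real.exp_zero]
  have hbeta : (1:ℝ) ≤ (1 - 4 / (3 * (Q : ℝ))) * (1 + 4 / Q) := by
    rw [← sub_nonneg]
    have hid : (1 - 4 / (3 * (Q:ℝ))) * (1 + 4 / Q) - 1 = (8 * (Q:ℝ) - 16) / (3 * Q ^ 2) := by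
      field_simp
      ring
    rw [hid]
    apply div_nonneg (by linarith) (by positivity)
  nlinarith [hexp, hbeta, h1]

private lemma choose_ratio_ge {C Q s : ℕ} (hC : 1 ≤ C) (hQ : 2 ≤ Q) (hs : 4 * s ≤ C * Q) :
    Real.exp (-(4 * (s:ℝ)) / Q) * ((C * Q).choose s : ℝ) ≤ ((C * Q - C).choose s : ℝ) := by
  have hQ0 : (0:ℝ) < Q := by positivity
  set β : ℝ := 1 - 4 / (3 * (Q : ℝ)) with hβ
  have hβ0 : 0 ≤ β := by
    have hQ2 : (2:ℝ) ≤ Q := by exact_mod_cast hQ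
    have : 4 / (3 * (Q:ℝ)) ≤ 4 / (3 * 2) := by
      apply div_le_div_of_nonneg_left (by norm_num) (by norm_num) (by linarith)
    rw [hβ]; linarith
  have key : ∀ j, j ≤ s → β ^ j * ((C * Q).choose j : ℝ) ≤ ((C * Q - C).choose j : ℝ) := by
    intro j hj
    induction j with
    | zero => simp
    | succ j ih =>
      have hj' : j ≤ s := Nat.le_of_succ_le hj
      have ihj := ih hj'
      have h4j : 4 * (j + 1) ≤ C * Q := le_trans (by omega) hs
      have hCle : 4 * C ≤ 3 * (C * Q) := by nlinarith
      have hjn : j < C * Q := by omega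
      have hjm : j < C * Q - C := by omega
      -- cast choose recursions
      have hc1 : ((C * Q).choose (j+1) : ℝ) * (j+1) = ((C * Q).choose j : ℝ) * ((C*Q : ℕ) - (j:ℝ)) := by
        have h := Nat.choose_succ_right_eq (C * Q) j
        have hcast := congrArg (fun x : ℕ => (x : ℝ)) h
        push_cast [Nat.cast_sub hjn.le] at hcast
        push_cast
        linarith [hcast]
      have hc2 : ((C * Q - C).choose (j+1) : ℝ) * (j+1) = ((C * Q - C).choose j : ℝ) * ((C*Q - C : ℕ) - (j:ℝ)) := by
        have h := Nat.choose_succ_right_eq (C * Q - C) j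
        have hcast := congrArg (fun x : ℕ => (x : ℝ)) h
        push_cast [Nat.cast_sub hjm.le] at hcast
        push_cast
        linarith [hcast]
      have hfac : β * (((C*Q : ℕ):ℝ) - j) ≤ ((C*Q - C : ℕ):ℝ) - j := by
        have hmc : ((C*Q - C : ℕ):ℝ) = ((C*Q : ℕ):ℝ) - C := by
          push_cast [Nat.cast_sub (by omega : C ≤ C * Q)]; ring
        rw [hmc, hβ]
        have h3Q : (0:ℝ) < 3 * Q := by positivity
        have h1 : (C:ℝ) * (3 * Q) ≤ 4 * (((C*Q:ℕ):ℝ) - j) := by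
          have hj4 : (4:ℝ) * j + 4 ≤ ((C*Q:ℕ):ℝ) := by exact_mod_cast h4j
          push_cast at hj4 ⊢
          nlinarith
        have h2 : (C:ℝ) ≤ 4 / (3 * (Q:ℝ)) * (((C*Q:ℕ):ℝ) - j) := by
          rw [div_mul_eq_mul_div, le_div_iff₀ h3Q]
          linarith
        nlinarith [h2]
      have hβj : 0 ≤ β ^ j := pow_nonneg hβ0 j
      have hchj : (0:ℝ) ≤ ((C * Q).choose j : ℝ) := by positivity
      have hq1 : β ^ (j+1) * ((C * Q).choose (j+1) : ℝ) * (j+1)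
          = (β ^ j * ((C * Q).choose j : ℝ)) * (β * (((C*Q:ℕ):ℝ) - j)) := by
        rw [pow_succ]
        linear_combination (β ^ j * β) * hc1
      have hnonneg2 : (0:ℝ) ≤ β * (((C*Q:ℕ):ℝ) - j) := by
        apply mul_nonneg hβ0
        have : (j:ℝ) + 1 ≤ ((C*Q:ℕ):ℝ) := by exact_mod_cast hjn
        linarith
      have hmain : β ^ (j+1) * ((C * Q).choose (j+1) : ℝ) * (j+1) ≤ ((C * Q - C).choose (j+1) : ℝ) * (j+1) := by
        rw [hq1, hc2]
        apply mul_le_mul ihj hfac hnonneg2 (by positivity)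
      have hj1 : (0:ℝ) < (j:ℝ) + 1 := by positivity
      exact le_of_mul_le_mul_right hmain hj1
  have hs' := key s le_rfl
  have hexpβ : Real.exp (-(4 * (s:ℝ)) / Q) ≤ β ^ s := by
    have h1 : Real.exp (-(4 * (s:ℝ)) / Q) = Real.exp (-4 / Q) ^ s := by
      rw [← Real.exp_nat_mul]
      congr 1
      ring
    rw [h1]
    exact pow_le_pow_left₀ (Real.exp_nonneg _) (exp_le_beta hQ) s
  calc Real.exp (-(4 * (s:ℝ)) / Q) * ((C * Q).choose s : ℝ)
      ≤ β ^ s * ((C * Q).choose s : ℝ) := by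
        apply mul_le_mul_of_nonneg_right hexpβ (by positivity)
    _ ≤ _ := hs'

/-- Single-contiguous-sequence case of Lemma `LemmaContSeq`: a set `S` of `C·Q`
subintervals is partitioned into `Q` blocks of size `C`; sampling a uniform
random `s`-subset of `S` (with `4s ≤ CQ`, `Q ≥ 2`), the probability that every
block is hit is at most `(1 − exp(−4s/Q))^Q`. Probabilities are counting ratios
over the uniform distribution on `s`-element subsets of `S`. -/
theorem one_sequence_all_hit {α : Type*} [DecidableEq α]
    (C Q s : ℕ) (hC : 1 ≤ C) (hQ : 2 ≤ Q) (hs : 4 * s ≤ C * Q)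
    (S : Finset α) (hScard : S.card = C * Q)
    (B : Fin Q → Finset α) (hBsub : ∀ i, B i ⊆ S) (hBcard : ∀ i, (B i).card = C)
    (hdisj : ∀ i j, i ≠ j → Disjoint (B i) (B j))
    (hcover : S = Finset.univ.biUnion B) :
    (((S.powersetCard s).filter (fun A => ∀ i, (A ∩ B i).Nonempty)).card : ℝ) /
        ((S.powersetCard s).card : ℝ) ≤
      (1 - Real.exp (-(4 * (s : ℝ)) / (Q : ℝ))) ^ Q := by
  classical
  have hsn : s ≤ C * Q := by omega
  have hsm : s ≤ C * Q - C := by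
    have h1 : 4 * C ≤ 3 * (C * Q) := by nlinarith
    omega
  have hD : (S.powersetCard s).card = (C * Q).choose s := by
    rw [card_powersetCard, hScard]
  have hDpos : 0 < (C * Q).choose s := Nat.choose_pos hsn
  have hD0 : (0:ℝ) < ((C * Q).choose s : ℝ) := by exact_mod_cast hDpos
  set D : ℝ := ((C * Q).choose s : ℝ) with hDdef
  set ρ : ℝ := ((C * Q - C).choose s : ℝ) / D with hρ
  have hρ1 : ρ ≤ 1 := by
    rw [hρ, div_le_one hD0, hDdef]
    exact_mod_cast Nat.choose_le_choose s (by omega : C * Q - C ≤ C * Q)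
  have h1ρ : 0 ≤ 1 - ρ := by linarith
  have main : ∀ I : Finset (Fin Q),
      (((S.powersetCard s).filter (fun A => ∀ i ∈ I, (A ∩ B i).Nonempty)).card : ℝ)
        ≤ (1 - ρ) ^ I.card * D := by
    intro I
    induction I using Finset.induction_on with
    | empty =>
      have heq : ((S.powersetCard s).filter
          (fun A => ∀ i ∈ (∅ : Finset (Fin Q)), (A ∩ B i).Nonempty)) = S.powersetCard s := by
        apply filter_true_of_mem; intro A _; simp
      rw [heq, hD, card_empty, pow_zero, one_mul]
    | @insert q I hqI ih =>
      set PI : Finset α → Prop := fun A => ∀ i ∈ I, (A ∩ B i).Nonempty with hPI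
      have hmono : ∀ ⦃A : Finset α⦄ (x : α), PI A → PI (insert x A) := by
        intro A x hA i hi
        obtain ⟨y, hy⟩ := hA i hi
        exact ⟨y, mem_inter.2 ⟨mem_insert_of_mem (mem_inter.1 hy).1, (mem_inter.1 hy).2⟩⟩
      set S' : Finset α := S \ B q with hS'
      have hS'card : S'.card = C * Q - C := by
        rw [hS', card_sdiff_of_subset (hBsub q), hScard, hBcard q]
      have hunion : S' ∪ B q = S := sdiff_union_of_subset (hBsub q)
      have hdq : Disjoint S' (B q) := sdiff_disjoint
      have heqBi : ∀ (A : Finset α), ∀ i ∈ I, (A ∩ S') ∩ B i = A ∩ B i := by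
        intro A i hi
        ext x
        simp only [mem_inter, hS', mem_sdiff]
        constructor
        · rintro ⟨⟨hxA, _, _⟩, hxB⟩; exact ⟨hxA, hxB⟩
        · rintro ⟨hxA, hxB⟩
          refine ⟨⟨hxA, hBsub i hxB, fun hxq => ?_⟩, hxB⟩
          exact disjoint_left.1 (hdisj i q (by rintro rfl; exact hqI hi)) hxB hxq
      have hPdep : ∀ A, PI A ↔ PI (A ∩ S') := by
        intro A
        constructor <;> intro h i hi
        · rw [heqBi A i hi]; exact h i hi
        · have := h i hi; rwa [heqBi A i hi] at this
      have hground := hit_ground_mono S' (B q) hdq PI hPdep hmono s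
        (by rw [hS'card]; exact hsm)
      rw [hunion, hS'card, hScard] at hground
      -- split the count
      have hfeq : (S.powersetCard s).filter (fun A => ∀ i ∈ insert q I, (A ∩ B i).Nonempty)
          = ((S.powersetCard s).filter PI).filter (fun A => (A ∩ B q).Nonempty) := by
        rw [filter_filter]
        apply filter_congr
        intro A _
        simp only [forall_mem_insert, hPI]
        tauto
      have hsplit := card_filter_add_card_filter_not
        (s := (S.powersetCard s).filter PI) (p := fun A => (A ∩ B q).Nonempty)
      have hMeq : ((S.powersetCard s).filter PI).filter (fun A => ¬ (A ∩ B q).Nonempty)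
          = (S'.powersetCard s).filter PI := by
        ext A
        simp only [mem_filter, mem_powersetCard, not_nonempty_iff_eq_empty]
        constructor
        · rintro ⟨⟨⟨hAS, hAc⟩, hPIA⟩, hempty⟩
          refine ⟨⟨fun x hx => mem_sdiff.2 ⟨hAS hx, fun hxq => ?_⟩, hAc⟩, hPIA⟩
          have hmem : x ∈ A ∩ B q := mem_inter.2 ⟨hx, hxq⟩
          rw [hempty] at hmem
          exact notMem_empty x hmem
        · rintro ⟨⟨hAS', hAc⟩, hPIA⟩
          refine ⟨⟨⟨hAS'.trans sdiff_subset, hAc⟩, hPIA⟩, ?_⟩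
          rw [← disjoint_iff_inter_eq_empty]
          exact sdiff_disjoint.mono_left hAS'
      -- real arithmetic
      set NI : ℕ := ((S.powersetCard s).filter PI).card with hNI
      set M : ℕ := ((S'.powersetCard s).filter PI).card with hM
      set Nq : ℕ := ((S.powersetCard s).filter
          (fun A => ∀ i ∈ insert q I, (A ∩ B i).Nonempty)).card with hNq
      have hsplit' : Nq + M = NI := by
        rw [hNq, hfeq, hM, ← hMeq, hNI]
        exact hsplit
      have hgr : (NI : ℝ) * ((C * Q - C).choose s : ℝ) ≤ (M : ℝ) * D := by
        rw [hDdef]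
        exact_mod_cast hground
      have hMge : (NI : ℝ) * ρ ≤ (M : ℝ) := by
        rw [hρ, mul_div_assoc']
        rw [div_le_iff₀ hD0] at *
        calc (NI:ℝ) * ((C * Q - C).choose s : ℝ) ≤ (M:ℝ) * D := hgr
          _ = _ := by ring
      have hstep : (Nq : ℝ) ≤ (NI : ℝ) * (1 - ρ) := by
        have hNqr : (Nq : ℝ) = (NI : ℝ) - M := by
          have : (Nq : ℝ) + M = NI := by exact_mod_cast hsplit'
          linarith
        rw [hNqr]
        nlinarith [hMge]
      have hIcard : (insert q I).card = I.card + 1 := card_insert_of_notMem hqI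
      calc (Nq : ℝ) ≤ (NI : ℝ) * (1 - ρ) := hstep
        _ ≤ ((1 - ρ) ^ I.card * D) * (1 - ρ) := mul_le_mul_of_nonneg_right ih h1ρ
        _ = (1 - ρ) ^ (I.card + 1) * D := by ring
        _ = (1 - ρ) ^ (insert q I).card * D := by rw [hIcard]
  have huniv : ((S.powersetCard s).filter (fun A => ∀ i, (A ∩ B i).Nonempty))
      = ((S.powersetCard s).filter (fun A => ∀ i ∈ Finset.univ, (A ∩ B i).Nonempty)) := by
    apply filter_congr
    intro A _
    simp
  have hmainuniv := main Finset.univ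
  rw [card_univ, Fintype.card_fin] at hmainuniv
  have hexpρ : Real.exp (-(4 * (s:ℝ)) / Q) ≤ ρ := by
    rw [hρ, le_div_iff₀ hD0]
    exact choose_ratio_ge hC hQ hs
  have hρ0 : 0 ≤ ρ := by
    rw [hρ]
    positivity
  rw [huniv, hD, div_le_iff₀ hD0]
  calc (((S.powersetCard s).filter (fun A => ∀ i ∈ Finset.univ, (A ∩ B i).Nonempty)).card : ℝ)
      ≤ (1 - ρ) ^ Q * D := hmainuniv
    _ ≤ (1 - Real.exp (-(4 * (s : ℝ)) / (Q : ℝ))) ^ Q * D := by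
        apply mul_le_mul_of_nonneg_right _ hD0.le
        apply pow_le_pow_left₀ h1ρ (by linarith) Q
end

section
/- Let D and Q be positive natural numbers, let K ≥ 0 be a real number, and let K₁,…,K_D be nonnegative real numbers with Σ_{i=1}^D K_i = D·K. Then ∏_{i=1}^D (1 − exp(−4·K_i))^Q ≤ (1 − exp(−4·K))^{D·Q}. -/
/-- Optimization claim inside Lemma `LemmaContSeq`: among allocations
`K₁,…,K_D ≥ 0` with `Σ Kᵢ = D·K`, the product `∏ (1 − e^{−4Kᵢ})^Q` is maximized
by the equal allocation, so it is at most `(1 − e^{−4K})^{D·Q}`. -/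
theorem equal_allocation_optimal (D Q : ℕ) (hD : 0 < D) (hQ : 0 < Q)
    (K : ℝ) (hK : 0 ≤ K) (Ki : Fin D → ℝ) (hKi : ∀ i, 0 ≤ Ki i)
    (hsum : ∑ i, Ki i = (D : ℝ) * K) :
    ∏ i, (1 - Real.exp (-(4 * Ki i))) ^ Q ≤ (1 - Real.exp (-(4 * K))) ^ (D * Q) := by
  have hD' : (0:ℝ) < D := Nat.cast_pos.mpr hD
  set a : Fin D → ℝ := fun i => 1 - Real.exp (-(4 * Ki i)) with ha
  have ha0 : ∀ i, 0 ≤ a i := fun i => by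
    have : Real.exp (-(4 * Ki i)) ≤ 1 := by
      rw [Real.exp_le_one_iff]
      nlinarith [hKi i]
    simp only [ha]; linarith
  have hM0 : 0 ≤ 1 - Real.exp (-(4 * K)) := by
    have : Real.exp (-(4 * K)) ≤ 1 := by
      rw [Real.exp_le_one_iff]; nlinarith
    linarith
  -- convexity of exp : exp(-4K) ≤ average of exp(-4Ki)
  have hw' : ∑ _i : Fin D, (D:ℝ)⁻¹ = 1 := by
    simp [Finset.sum_const, Finset.card_univ, nsmul_eq_mul]
    field_simp
  have hexp : Real.exp (-(4*K)) ≤ ∑ i, (D:ℝ)⁻¹ * Real.exp (-(4 * Ki i)) := by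
    have := convexOn_exp.map_sum_le (t := (Finset.univ : Finset (Fin D)))
      (w := fun _ : Fin D => (D:ℝ)⁻¹) (p := fun i : Fin D => -(4 * Ki i))
      (fun i _ => by positivity) hw' (fun i _ => Set.mem_univ _)
    simp only [smul_eq_mul, Function.comp] at this
    have hsum' : ∑ i, (D:ℝ)⁻¹ * -(4 * Ki i) = -(4*K) := by
      rw [← Finset.mul_sum]
      have : ∑ i, -(4 * Ki i) = -(4 * ((D:ℝ) * K)) := by
        rw [Finset.sum_neg_distrib, ← Finset.mul_sum, hsum]
      rw [this]
      field_simp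
    rwa [hsum'] at this
  -- average of a ≤ 1 - exp(-4K)
  have havg : (∑ i, a i) / D ≤ 1 - Real.exp (-(4*K)) := by
    have h1 : (∑ i, a i) = D - ∑ i, Real.exp (-(4 * Ki i)) := by
      simp only [ha, Finset.sum_sub_distrib, Finset.sum_const, Finset.card_univ,
        Fintype.card_fin, nsmul_eq_mul, mul_one]
    have h2 : ∑ i, (D:ℝ)⁻¹ * Real.exp (-(4 * Ki i)) =
        (∑ i, Real.exp (-(4 * Ki i))) / D := by
      rw [← Finset.mul_sum]; ring
    rw [h1]
    rw [h2, le_div_iff₀ hD'] at hexp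
    rw [div_le_iff₀ hD']
    nlinarith
  -- AM-GM : ∏ a ≤ ((∑ a)/D)^D
  have hamgm : ∏ i, a i ≤ ((∑ i, a i) / D) ^ D := by
    have h := Real.geom_mean_le_arith_mean (Finset.univ : Finset (Fin D))
      (fun _ => (1:ℝ)) a (fun _ _ => zero_le_one)
      (by simp [Finset.card_univ]; exact_mod_cast hD) (fun i _ => ha0 i)
    simp only [Real.rpow_one, one_mul, Finset.sum_const, Finset.card_univ,
      Fintype.card_fin, nsmul_eq_mul, mul_one] at h
    have hp0 : 0 ≤ ∏ i, a i := Finset.prod_nonneg fun i _ => ha0 i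
    have key : ((∏ i, a i) ^ ((D:ℝ)⁻¹)) ^ (D:ℝ) = ∏ i, a i := by
      rw [← Real.rpow_mul hp0, inv_mul_cancel₀ (ne_of_gt hD'), Real.rpow_one]
    calc ∏ i, a i = ((∏ i, a i) ^ ((D:ℝ)⁻¹)) ^ (D:ℝ) := key.symm
      _ ≤ ((∑ i, a i) / D) ^ (D:ℝ) := by
          apply Real.rpow_le_rpow (Real.rpow_nonneg hp0 _) h (le_of_lt hD')
      _ = ((∑ i, a i) / D) ^ D := by
          rw [Real.rpow_natCast]
  have hfinal : ∏ i, a i ≤ (1 - Real.exp (-(4*K))) ^ D := by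
    refine hamgm.trans (pow_le_pow_left₀ ?_ havg D)
    exact div_nonneg (Finset.sum_nonneg fun i _ => ha0 i) (le_of_lt hD')
  calc ∏ i, a i ^ Q = (∏ i, a i) ^ Q := Finset.prod_pow _ _ _
    _ ≤ ((1 - Real.exp (-(4*K))) ^ D) ^ Q :=
        pow_le_pow_left₀ (Finset.prod_nonneg fun i _ => ha0 i) hfinal Q
    _ = (1 - Real.exp (-(4*K))) ^ (D * Q) := (pow_mul _ _ _).symm
end

section
/- Let C, p, s be natural numbers with C ≥ 1, p ≥ 2 and 4·s ≤ C·p. Let S be a finite set with |S| = C·p, partitioned into pairwise disjoint blocks B₁,…,B_p each of size C, let A be a uniform random s-subset of S, and let ρ be a real number with 0 < ρ < 1. If P(A ∩ B_i ≠ ∅ for all i = 1,…,p) ≥ ρ, then s ≥ (p/4)·log(p / log(1/ρ)). -/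
/-!
Hitting a block `B` is negatively correlated with every increasing event that depends only on
the part of the sample outside `B`: given that the sample meets `B` exactly in `K`, the rest of it
is a uniform `(s - #K)`-subset of `S \ B`, and an increasing event only becomes likelier as the
subset grows. Hence the probability of hitting all `p` blocks is at most
`(1 - q) ^ p ≤ exp (-p q)`, where `q = C(C (p - 1), s) / C(C p, s)` is the probability of missing
one block, so `p q ≤ log (1 / ρ)`. On the other hand `q ≥ (1 - s / (C (p - 1))) ^ C`, which is at
least `exp (-4 s / p)` because `4 s ≤ C p`.
-/

open Finset Function Real

namespace Finset

variable {α : Type*} [DecidableEq α]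

section UpperClosed

variable {T : Finset α} {E : Finset α → Prop} [DecidablePred E]

/-- Double count the pairs `Y ⊆ Z` of sets in `E` of sizes `m` and `m + 1`: since `E` is
increasing, each `Y` lies below `#T - m` such `Z`, and each `Z` lies above at most `m + 1` such `Y`.
-/
theorem card_filter_powersetCard_mul_le_succ (hE : Monotone E) (m : ℕ) :
    #{A ∈ T.powersetCard m | E A} * (#T - m) ≤
      #{A ∈ T.powersetCard (m + 1) | E A} * (m + 1) := by
  refine card_mul_le_card_mul (· ⊆ ·) (fun Y hY => ?_) (fun Z hZ => ?_)
  · obtain ⟨⟨hYT, hYm⟩, hEY⟩ := by simpa only [mem_filter, mem_powersetCard] using hY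
    rw [← hYm, ← card_sdiff_of_subset hYT,
      ← card_image_of_injOn ((insert_inj_on Y).mono fun x hx => (mem_sdiff.1 hx).2)]
    refine card_le_card fun Z hZ => ?_
    obtain ⟨x, hx, rfl⟩ := mem_image.1 hZ
    obtain ⟨hxT, hxY⟩ := mem_sdiff.1 hx
    simp only [mem_bipartiteAbove, mem_filter, mem_powersetCard]
    exact ⟨⟨⟨insert_subset hxT hYT, card_insert_of_notMem hxY⟩, hE (subset_insert x Y) hEY⟩,
      subset_insert x Y⟩
  · obtain ⟨⟨-, hZm⟩, -⟩ := by simpa only [mem_filter, mem_powersetCard] using hZ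
    calc #(bipartiteBelow (· ⊆ ·) _ Z) ≤ #(Z.powersetCard m) := card_le_card fun Y hY => by
          simp only [mem_bipartiteBelow, mem_filter, mem_powersetCard] at hY ⊢
          exact ⟨hY.2, hY.1.1.2⟩
      _ = m + 1 := by rw [card_powersetCard, hZm, Nat.choose_succ_self_right]

theorem card_filter_powersetCard_mul_choose_le (hE : Monotone E) {m m' : ℕ} (h : m ≤ m') :
    #{A ∈ T.powersetCard m | E A} * (#T).choose m' ≤
      #{A ∈ T.powersetCard m' | E A} * (#T).choose m := by
  induction m', h using Nat.le_induction with
  | base => rfl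
  | succ m' _ ih =>
    refine Nat.le_of_mul_le_mul_right ?_ m'.succ_pos
    calc #{A ∈ T.powersetCard m | E A} * (#T).choose (m' + 1) * (m' + 1)
        = #{A ∈ T.powersetCard m | E A} * (#T).choose m' * (#T - m') := by
          rw [mul_assoc, Nat.choose_succ_right_eq, mul_assoc]
      _ ≤ #{A ∈ T.powersetCard m' | E A} * (#T).choose m * (#T - m') :=
          Nat.mul_le_mul_right _ ih
      _ = #{A ∈ T.powersetCard m' | E A} * (#T - m') * (#T).choose m := by ring
      _ ≤ #{A ∈ T.powersetCard (m' + 1) | E A} * (m' + 1) * (#T).choose m :=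
          Nat.mul_le_mul_right _ (card_filter_powersetCard_mul_le_succ hE m')
      _ = #{A ∈ T.powersetCard (m' + 1) | E A} * (#T).choose m * (m' + 1) := by ring

end UpperClosed

variable {S B K : Finset α} {s : ℕ} {E : Finset α → Prop} [DecidablePred E]

theorem card_filter_powersetCard_inter_eq (hEB : ∀ A, E (A \ B) ↔ E A) (hKS : K ⊆ S)
    (hKB : K ⊆ B) (hKs : #K ≤ s) :
    #{A ∈ S.powersetCard s | E A ∧ A ∩ B = K} = #{A ∈ (S \ B).powersetCard (s - #K) | E A} := by
  have hunion : ∀ {A'}, A' ⊆ S \ B → (A' ∪ K) \ B = A' ∧ (A' ∪ K) ∩ B = K ∧ Disjoint A' K := by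
    intro A' hA'
    exact ⟨by grind, by grind, disjoint_of_subset_right hKB (subset_sdiff.1 hA').2⟩
  refine card_nbij' (· \ B) (· ∪ K) (fun A hA => ?_) (fun A' hA' => ?_) (fun A hA => ?_)
    (fun A' hA' => (hunion (mem_powersetCard.1 (mem_filter.1 hA').1).1).1)
  · simp only [coe_filter, mem_powersetCard, Set.mem_ofPred_eq] at hA ⊢
    obtain ⟨⟨hAS, hAs⟩, hEA, hAB⟩ := hA
    refine ⟨⟨sdiff_subset_sdiff hAS subset_rfl, ?_⟩, (hEB A).2 hEA⟩
    rw [card_sdiff, inter_comm, hAB, hAs]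
  · simp only [coe_filter, mem_powersetCard, Set.mem_ofPred_eq] at hA' ⊢
    obtain ⟨⟨hA'S, hA's⟩, hEA'⟩ := hA'
    obtain ⟨hsdiff, hinter, hdisj⟩ := hunion hA'S
    refine ⟨⟨union_subset (hA'S.trans sdiff_subset) hKS, ?_⟩, ?_, hinter⟩
    · rw [card_union_of_disjoint hdisj, hA's, Nat.sub_add_cancel hKs]
    · rw [← hEB, hsdiff]; exact hEA'
  · simp only [coe_filter, mem_powersetCard, Set.mem_ofPred_eq] at hA
    exact hA.2.2 ▸ sdiff_union_inter A B

theorem card_filter_powersetCard_inter_eq_empty (hEB : ∀ A, E (A \ B) ↔ E A) :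
    #{A ∈ S.powersetCard s | E A ∧ A ∩ B = ∅} = #{A ∈ (S \ B).powersetCard s | E A} := by
  simpa using card_filter_powersetCard_inter_eq hEB (empty_subset S) (empty_subset B) s.zero_le

theorem card_filter_mul_card_filter_inter_eq_empty_le (hE : Monotone E)
    (hEB : ∀ A, E (A \ B) ↔ E A) :
    #{A ∈ S.powersetCard s | E A} * #{A ∈ S.powersetCard s | A ∩ B = ∅} ≤
      #{A ∈ S.powersetCard s | E A ∧ A ∩ B = ∅} * #(S.powersetCard s) := by
  have hmaps : Set.MapsTo (· ∩ B) (S.powersetCard s : Set (Finset α)) (S ∩ B).powerset :=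
    fun A hA => mem_powerset.2 (inter_subset_inter_right (mem_powersetCard.1 hA).1)
  have hmiss : #{A ∈ S.powersetCard s | A ∩ B = ∅} = (#(S \ B)).choose s := by
    simpa using card_filter_powersetCard_inter_eq_empty (S := S) (B := B) (s := s)
      (E := fun _ => True) (fun _ => Iff.rfl)
  have hfiber : ∀ K ∈ (S ∩ B).powerset,
      #{A ∈ S.powersetCard s | E A ∧ A ∩ B = K} * (#(S \ B)).choose s ≤
        #{A ∈ (S \ B).powersetCard s | E A} * #{A ∈ S.powersetCard s | A ∩ B = K} := by
    intro K hK
    obtain ⟨hKS, hKB⟩ := subset_inter_iff.1 (mem_powerset.1 hK)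
    by_cases hKs : #K ≤ s
    · have hall : #{A ∈ S.powersetCard s | A ∩ B = K} = (#(S \ B)).choose (s - #K) := by
        simpa using card_filter_powersetCard_inter_eq (E := fun _ => True) (fun _ => Iff.rfl)
          hKS hKB hKs
      rw [card_filter_powersetCard_inter_eq hEB hKS hKB hKs, hall]
      exact card_filter_powersetCard_mul_choose_le hE (Nat.sub_le s #K)
    · have hempty : #{A ∈ S.powersetCard s | E A ∧ A ∩ B = K} = 0 := by
        refine card_eq_zero.2 (filter_eq_empty_iff.2 fun A hA ⟨_, hAB⟩ => hKs ?_)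
        exact (mem_powersetCard.1 hA).2 ▸ hAB ▸ card_le_card inter_subset_left
      simp [hempty]
  calc #{A ∈ S.powersetCard s | E A} * #{A ∈ S.powersetCard s | A ∩ B = ∅}
      = ∑ K ∈ (S ∩ B).powerset,
          #{A ∈ S.powersetCard s | E A ∧ A ∩ B = K} * (#(S \ B)).choose s := by
        rw [card_eq_sum_card_fiberwise (hmaps.mono_left (filter_subset _ _)), hmiss, sum_mul]
        simp only [filter_filter]
    _ ≤ ∑ K ∈ (S ∩ B).powerset,
          #{A ∈ (S \ B).powersetCard s | E A} * #{A ∈ S.powersetCard s | A ∩ B = K} :=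
        sum_le_sum hfiber
    _ = #{A ∈ S.powersetCard s | E A ∧ A ∩ B = ∅} * #(S.powersetCard s) := by
        rw [← mul_sum, ← card_eq_sum_card_fiberwise hmaps,
          card_filter_powersetCard_inter_eq_empty hEB]

end Finset

noncomputable def uniformSubsetProb {α : Type*} (S : Finset α) (s : ℕ) (E : Finset α → Prop)
    [DecidablePred E] : ℝ :=
  #{A ∈ S.powersetCard s | E A} / #(S.powersetCard s)

section UniformSubsetProb

variable {α : Type*} {S B : Finset α} {s : ℕ} {E : Finset α → Prop} [DecidablePred E]

theorem uniformSubsetProb_le_one : uniformSubsetProb S s E ≤ 1 :=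
  div_le_one_of_le₀ (mod_cast card_filter_le _ _) (Nat.cast_nonneg _)

theorem uniformSubsetProb_nonneg : 0 ≤ uniformSubsetProb S s E := by
  unfold uniformSubsetProb; positivity

variable [DecidableEq α]

theorem uniformSubsetProb_inter_nonempty (hs : s ≤ #S) :
    uniformSubsetProb S s (fun A => (A ∩ B).Nonempty) =
      1 - ((#(S \ B)).choose s : ℝ) / (#S).choose s := by
  have hmiss : #{A ∈ S.powersetCard s | ¬(A ∩ B).Nonempty} = (#(S \ B)).choose s := by
    simpa [not_nonempty_iff_eq_empty] using
      card_filter_powersetCard_inter_eq_empty (S := S) (s := s) (E := fun _ => True)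
        (fun _ => Iff.rfl)
  have hsplit := card_filter_add_card_filter_not (s := S.powersetCard s)
    (fun A => (A ∩ B).Nonempty)
  rw [hmiss, card_powersetCard] at hsplit
  have hpos : (0 : ℝ) < (#S).choose s := mod_cast Nat.choose_pos hs
  rw [uniformSubsetProb, card_powersetCard, eq_sub_iff_add_eq, ← add_div,
    div_eq_one_iff_eq hpos.ne']
  exact_mod_cast hsplit

theorem uniformSubsetProb_and_inter_nonempty_le (hE : Monotone E) (hEB : ∀ A, E (A \ B) ↔ E A) :
    uniformSubsetProb S s (fun A => E A ∧ (A ∩ B).Nonempty) ≤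
      uniformSubsetProb S s E * uniformSubsetProb S s (fun A => (A ∩ B).Nonempty) := by
  have hcorr := card_filter_mul_card_filter_inter_eq_empty_le (S := S) (s := s) hE hEB
  have hE_split := card_filter_add_card_filter_not (s := {A ∈ S.powersetCard s | E A})
    (fun A => (A ∩ B).Nonempty)
  have hall_split := card_filter_add_card_filter_not (s := S.powersetCard s)
    (fun A => (A ∩ B).Nonempty)
  simp only [filter_filter, not_nonempty_iff_eq_empty] at hE_split hall_split
  unfold uniformSubsetProb
  rw [← hE_split, ← hall_split] at hcorr ⊢
  set a := #{A ∈ S.powersetCard s | E A ∧ (A ∩ B).Nonempty}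
  set b := #{A ∈ S.powersetCard s | E A ∧ A ∩ B = ∅}
  set h := #{A ∈ S.powersetCard s | (A ∩ B).Nonempty}
  set m := #{A ∈ S.powersetCard s | A ∩ B = ∅}
  rcases (h + m).eq_zero_or_pos with hN | hN
  · simp [hN]
  have hhit_corr : a * (h + m) ≤ (a + b) * h := by nlinarith
  rw [div_mul_div_comm, div_le_div_iff₀ (by positivity) (by positivity), ← mul_assoc]
  exact_mod_cast Nat.mul_le_mul_right (h + m) hhit_corr

theorem uniformSubsetProb_forall_inter_nonempty_le_prod {ι : Type*} {B : ι → Finset α}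
    (hB : Pairwise (Disjoint on B)) (I : Finset ι) :
    uniformSubsetProb S s (fun A => ∀ i ∈ I, (A ∩ B i).Nonempty) ≤
      ∏ i ∈ I, uniformSubsetProb S s (fun A => (A ∩ B i).Nonempty) := by
  classical
  induction I using Finset.induction_on with
  | empty => simpa using uniformSubsetProb_le_one
  | insert k I hk ih =>
    have hmono : Monotone fun A : Finset α => ∀ i ∈ I, (A ∩ B i).Nonempty :=
      fun Y Z hYZ hY i hi => (hY i hi).mono (inter_subset_inter_right hYZ)
    have hoff : ∀ A, (∀ i ∈ I, ((A \ B k) ∩ B i).Nonempty) ↔ ∀ i ∈ I, (A ∩ B i).Nonempty := by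
      refine fun A => forall₂_congr fun i hi => ?_
      rw [sdiff_inter_right_comm, sdiff_eq_self_of_disjoint
        ((hB (ne_of_mem_of_not_mem hi hk)).mono_left inter_subset_right)]
    calc uniformSubsetProb S s (fun A => ∀ i ∈ insert k I, (A ∩ B i).Nonempty)
        = uniformSubsetProb S s (fun A => (∀ i ∈ I, (A ∩ B i).Nonempty) ∧ (A ∩ B k).Nonempty) := by
          simp only [forall_mem_insert, and_comm]
      _ ≤ uniformSubsetProb S s (fun A => ∀ i ∈ I, (A ∩ B i).Nonempty) *
            uniformSubsetProb S s (fun A => (A ∩ B k).Nonempty) :=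
          uniformSubsetProb_and_inter_nonempty_le hmono hoff
      _ ≤ ∏ i ∈ insert k I, uniformSubsetProb S s (fun A => (A ∩ B i).Nonempty) := by
          rw [prod_insert hk, mul_comm]
          exact mul_le_mul_of_nonneg_left ih uniformSubsetProb_nonneg

end UniformSubsetProb

theorem one_sub_div_mul_choose_succ_le {m n s : ℕ} (hs : s ≤ m) (hmn : m ≤ n + 1) :
    (1 - s / m : ℝ) * (n + 1).choose s ≤ n.choose s := by
  rcases m.eq_zero_or_pos with rfl | hm
  · simp [Nat.le_zero.1 hs]
  have hsn : s ≤ n + 1 := hs.trans hmn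
  have hid : (n.choose s : ℝ) * (n + 1) = (n + 1).choose s * ((n + 1 : ℝ) - s) := by
    have h := congrArg (Nat.cast (R := ℝ)) (Nat.choose_mul_succ_eq n s)
    push_cast [Nat.cast_sub hsn] at h
    exact h
  calc (1 - s / m : ℝ) * (n + 1).choose s ≤ (1 - s / (n + 1 : ℝ)) * (n + 1).choose s := by
        gcongr
        exact_mod_cast hmn
    _ = n.choose s := by
        field_simp
        linarith

theorem one_sub_div_pow_mul_choose_add_le {m s : ℕ} (hs : s ≤ m) (j : ℕ) :
    (1 - s / m : ℝ) ^ j * (m + j).choose s ≤ m.choose s := by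
  induction j with
  | zero => simp
  | succ j ih =>
    have hy : (0 : ℝ) ≤ 1 - s / m := by
      rcases m.eq_zero_or_pos with rfl | hm
      · simp
      · rw [sub_nonneg, div_le_one (by positivity)]; exact_mod_cast hs
    calc (1 - s / m : ℝ) ^ (j + 1) * (m + (j + 1)).choose s
        = (1 - s / m : ℝ) ^ j * ((1 - s / m) * (m + j + 1).choose s) := by
          rw [pow_succ, ← add_assoc]; ring
      _ ≤ (1 - s / m : ℝ) ^ j * (m + j).choose s := by
          gcongr
          exact one_sub_div_mul_choose_succ_le hs (by omega)
      _ ≤ m.choose s := ih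

theorem neg_two_mul_div_le_log_choose_div_choose {m j s : ℕ} (hs : 2 * s ≤ m) :
    -(2 * j * s / m : ℝ) ≤ log (m.choose s / (m + j).choose s) := by
  set y : ℝ := s / m with hy_def
  have hy0 : 0 ≤ y := by positivity
  have hy : y ≤ 1 / 2 := by
    rcases m.eq_zero_or_pos with rfl | hm
    · simp [y]
    · rw [hy_def, div_le_iff₀ (by positivity)]
      have : (2 * s : ℝ) ≤ m := by exact_mod_cast hs
      linarith
  have hpos : 0 < 1 - y := by linarith
  have hratio : (1 - y) ^ j ≤ m.choose s / (m + j).choose s :=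
    (le_div_iff₀ (mod_cast Nat.choose_pos (by omega))).2
      (one_sub_div_pow_mul_choose_add_le (by omega) j)
  have hinv : (1 - y)⁻¹ ≤ 1 + 2 * y := by
    rw [inv_le_iff_one_le_mul₀' hpos]; nlinarith
  calc -(2 * j * s / m : ℝ) = j * (-2 * y) := by ring
    _ ≤ j * log (1 - y) := by
        gcongr
        linarith [one_sub_inv_le_log_of_pos hpos]
    _ = log ((1 - y) ^ j) := (log_pow (1 - y) j).symm
    _ ≤ log (m.choose s / (m + j).choose s) := log_le_log (pow_pos hpos j) hratio

theorem neg_four_mul_div_le_log_choose_div_choose {C p s : ℕ} (hp : 2 ≤ p)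
    (hs : 4 * s ≤ C * p) :
    -(4 * s / p : ℝ) ≤ log ((C * (p - 1)).choose s / (C * p).choose s) := by
  have hCp : C * (p - 1) + C = C * p := by
    rw [← Nat.mul_succ]; congr; omega
  have h2C : 2 * C ≤ C * p := by rw [mul_comm]; exact Nat.mul_le_mul_left C hp
  have hbound : (2 * C * s / (C * (p - 1) : ℕ) : ℝ) ≤ 4 * s / p := by
    rcases C.eq_zero_or_pos with rfl | hC
    · simp; positivity
    have hp2 : (2 : ℝ) ≤ p := by exact_mod_cast hp
    rw [Nat.cast_mul, Nat.cast_sub (by omega : 1 ≤ p), Nat.cast_one,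
      div_le_div_iff₀ (by have : (0 : ℝ) < C := mod_cast hC; nlinarith) (by positivity)]
    nlinarith [mul_nonneg (mul_nonneg (Nat.cast_nonneg (α := ℝ) C) (Nat.cast_nonneg (α := ℝ) s))
      (sub_nonneg.2 hp2)]
  calc -(4 * s / p : ℝ) ≤ -(2 * C * s / (C * (p - 1) : ℕ)) := neg_le_neg hbound
    _ ≤ log ((C * (p - 1)).choose s / (C * p).choose s) := by
        rw [← hCp]; exact neg_two_mul_div_le_log_choose_div_choose (by omega)

theorem one_round_sample_lower_bound_general {α : Type*} [DecidableEq α]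
    (C p s : ℕ) (hp : 2 ≤ p) (hs : 4 * s ≤ C * p)
    (S : Finset α) (hScard : S.card = C * p)
    (B : Fin p → Finset α) (hBsub : ∀ i, B i ⊆ S) (hBcard : ∀ i, (B i).card = C)
    (hdisj : ∀ i j, i ≠ j → Disjoint (B i) (B j))
    (ρ : ℝ) (hρ0 : 0 < ρ)
    (hhit : ρ ≤ (((S.powersetCard s).filter (fun A => ∀ i, (A ∩ B i).Nonempty)).card : ℝ) /
        ((S.powersetCard s).card : ℝ)) :
    ((p : ℝ) / 4) * Real.log ((p : ℝ) / Real.log (1 / ρ)) ≤ (s : ℝ) := by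
  set q : ℝ := ((C * (p - 1)).choose s : ℝ) / (C * p).choose s
  have hsm : s ≤ C * (p - 1) := by
    have := Nat.mul_le_mul_left C hp
    rw [Nat.mul_sub_one]; omega
  have hq : 0 < q := div_pos (mod_cast Nat.choose_pos hsm) (mod_cast Nat.choose_pos (by omega))
  have hprob : ∀ i, uniformSubsetProb S s (fun A => (A ∩ B i).Nonempty) = 1 - q := fun i => by
    rw [uniformSubsetProb_inter_nonempty (by omega), card_sdiff_of_subset (hBsub i), hScard,
      hBcard, ← Nat.mul_sub_one]
  have hall := uniformSubsetProb_forall_inter_nonempty_le_prod (S := S) (s := s) (B := B) hdisj univ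
  have hρq : ρ ≤ exp (-(p * q)) :=
    calc ρ ≤ ∏ i, uniformSubsetProb S s (fun A => (A ∩ B i).Nonempty) :=
          (hhit.trans_eq (by simp only [uniformSubsetProb, mem_univ, true_imp_iff])).trans hall
      _ = (1 - q) ^ p := by simp [hprob]
      _ ≤ exp (-q) ^ p :=
          pow_le_pow_left₀ (hprob ⟨0, by omega⟩ ▸ uniformSubsetProb_nonneg) (one_sub_le_exp_neg q) p
      _ = exp (-(p * q)) := by rw [← exp_nat_mul]; ring_nf
  have hpq : p * q ≤ log (1 / ρ) := by
    rw [one_div, log_inv]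
    linarith [log_le_log hρ0 hρq, log_exp (-(p * q))]
  have hp0 : (0 : ℝ) < p := by positivity
  have hlog : log (p / log (1 / ρ)) ≤ -log q := by
    have ht : 0 < log (1 / ρ) := (mul_pos hp0 hq).trans_le hpq
    rw [← log_inv]
    refine log_le_log (div_pos hp0 ht) ((div_le_iff₀ ht).2 ?_)
    rw [inv_mul_eq_div, le_div_iff₀ hq]
    exact hpq
  calc (p : ℝ) / 4 * log (p / log (1 / ρ)) ≤ p / 4 * (4 * s / p) := by
        gcongr
        linarith [neg_four_mul_div_le_log_choose_div_choose hp hs]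
    _ = s := by field_simp

/-- Combinatorial core of Theorem `TheoremOne`: the `C·p` subintervals are
partitioned into `p` blocks (intervals) of size `C`; if a uniform random
`s`-subset hits every block with probability at least `ρ`, then
`s ≥ (p/4)·log(p/log(1/ρ))`, i.e. `Ω(p log p)` samples are needed in one round.
Probabilities are counting ratios over the uniform distribution on `s`-element
subsets of `S`. -/
theorem one_round_sample_lower_bound {α : Type*} [DecidableEq α]
    (C p s : ℕ) (hC : 1 ≤ C) (hp : 2 ≤ p) (hs : 4 * s ≤ C * p)
    (S : Finset α) (hScard : S.card = C * p)
    (B : Fin p → Finset α) (hBsub : ∀ i, B i ⊆ S) (hBcard : ∀ i, (B i).card = C)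
    (hdisj : ∀ i j, i ≠ j → Disjoint (B i) (B j))
    (hcover : S = Finset.univ.biUnion B)
    (ρ : ℝ) (hρ0 : 0 < ρ) (hρ1 : ρ < 1)
    (hhit : ρ ≤ (((S.powersetCard s).filter (fun A => ∀ i, (A ∩ B i).Nonempty)).card : ℝ) /
        ((S.powersetCard s).card : ℝ)) :
    ((p : ℝ) / 4) * Real.log ((p : ℝ) / Real.log (1 / ρ)) ≤ (s : ℝ) :=
  one_round_sample_lower_bound_general C p s hp hs S hScard B hBsub hBcard hdisj ρ hρ0 hhit
end

section
/- Fix natural numbers m₁ ≥ 1 and m₂, and set m = m₁ + m₂. Consider the uniform probability distribution on the set of binary strings of length m containing exactly m₁ symbols 'a' and m₂ symbols 'b'. For a natural number k with 1 ≤ k ≤ m₁, let s_{1k} denote the number of maximal runs of consecutive a's having length at least k. Then E[s_{1k}] = (m₂+1)·m₁^{(k)} / m^{(k)}, where a^{(j)} denotes the falling factorial a·(a−1)···(a−j+1) with a^{(0)} = 1. -/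
/-!
Count runs by their starting positions and exchange the order of summation. A run of length
at least `k` starts at `i` exactly when positions `i, …, i + k - 1` carry `a` and position
`i - 1` (if `i > 0`) carries `b`. Among the `C(m, m₁)` strings, this happens at `i = 0` for
`C(m - k, m₁ - k)` of them and at each of the `m - k` later admissible positions for
`C(m - k - 1, m₁ - k)` of them; these add up to `(m₂ + 1) C(m - k, m₁ - k)`, and
`C(m - k, m₁ - k) / C(m, m₁) = m₁^(k) / m^(k)`.
-/

open Finset

/-- The number of maximal runs of `a`'s (`true`s) of length at least `k` in a
binary string `w` of length `m`: each such run is counted once via its starting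
position `i`, i.e. a position with `k` consecutive `true`s from `i` on, whose
predecessor (if any) is `false`. -/
def runsAtLeast (m k : ℕ) (w : Fin m → Bool) : ℕ :=
  (Finset.univ.filter (fun i : Fin m =>
    (i : ℕ) + k ≤ m ∧
    (∀ j : Fin m, (i : ℕ) ≤ (j : ℕ) → (j : ℕ) < (i : ℕ) + k → w j = true) ∧
    (∀ j : Fin m, (j : ℕ) + 1 = (i : ℕ) → w j = false))).card

theorem Nat.mul_choose_sub_one (n r : ℕ) : n * (n - 1).choose r = (n - r) * n.choose r := by
  cases n with
  | zero => simp
  | succ n => rw [Nat.add_sub_cancel, mul_comm, Nat.choose_mul_succ_eq, mul_comm]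

theorem Nat.choose_sub_mul_descFactorial {m n k : ℕ} (hkn : k ≤ n) :
    (m - k).choose (n - k) * m.descFactorial k = m.choose n * n.descFactorial k := by
  rw [Nat.descFactorial_eq_factorial_mul_choose, Nat.descFactorial_eq_factorial_mul_choose,
    mul_left_comm (m.choose n), Nat.choose_mul hkn]
  ring

theorem card_boolFun_prescribed {ι : Type*} [Fintype ι] [DecidableEq ι] (t : ℕ)
    {A B : Finset ι} (hAB : Disjoint A B) (hA : #A ≤ t) :
    #{w : ι → Bool | #{j | w j = true} = t ∧ (∀ j ∈ A, w j = true) ∧ ∀ j ∈ B, w j = false} =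
      (Fintype.card ι - #B - #A).choose (t - #A) := by
  rw [← card_compl, ← card_filter_powersetCard_subset A Bᶜ t
    (subset_compl_iff_disjoint_right.2 hAB) hA]
  refine card_nbij' (fun w => ({j | w j = true} : Finset ι)) (fun S j => decide (j ∈ S))
    ?_ ?_ ?_ ?_
  · intro w hw
    simp only [coe_filter, mem_univ, true_and, Set.mem_ofPred_eq] at hw
    obtain ⟨hcard, htrue, hfalse⟩ := hw
    simp only [coe_filter, mem_powersetCard, Set.mem_ofPred_eq]
    refine ⟨⟨fun j hj => mem_compl.2 fun hjB => ?_, hcard⟩,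
      fun j hj => by simpa using htrue j hj⟩
    simp [hfalse j hjB] at hj
  · intro S hS
    simp only [coe_filter, mem_powersetCard, Set.mem_ofPred_eq,
      subset_compl_iff_disjoint_right] at hS
    obtain ⟨⟨hSB, hcard⟩, hAS⟩ := hS
    simp only [coe_filter, mem_univ, true_and, Set.mem_ofPred_eq, decide_eq_true_eq,
      decide_eq_false_iff_not, filter_mem_eq_inter, univ_inter]
    exact ⟨hcard, fun j hj => hAS hj, fun j hj => disjoint_right.1 hSB hj⟩
  · intro w _; funext j; simp
  · intro S _; ext j; simp

def IsRunStart (m k i : ℕ) (w : Fin m → Bool) : Prop :=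
  i + k ≤ m ∧ (∀ j : Fin m, i ≤ j → j < i + k → w j = true) ∧
    ∀ j : Fin m, j + 1 = i → w j = false

instance (m k i : ℕ) (w : Fin m → Bool) : Decidable (IsRunStart m k i w) := by
  unfold IsRunStart; infer_instance

theorem runsAtLeast_eq_card_isRunStart (m k : ℕ) (w : Fin m → Bool) :
    runsAtLeast m k w = #{i : Fin m | IsRunStart m k i w} := rfl

theorem Fin.card_filter_le_val_lt_add {m i k : ℕ} (h : i + k ≤ m) :
    #{j : Fin m | i ≤ (j : ℕ) ∧ (j : ℕ) < i + k} = k := by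
  have hmap : ({j : Fin m | i ≤ (j : ℕ) ∧ (j : ℕ) < i + k} : Finset _).map Fin.valEmbedding =
      Ico i (i + k) := by
    ext x; simp [Fin.exists_iff]; omega
  rw [← card_map, hmap, Nat.card_Ico, Nat.add_sub_cancel_left]

theorem card_isRunStart {m k i t : ℕ} (h : i + k ≤ m) (hk : k ≤ t) :
    #{w : Fin m → Bool | #{j | w j = true} = t ∧ IsRunStart m k i w} =
      (m - #{j : Fin m | (j : ℕ) + 1 = i} - k).choose (t - k) := by
  set A : Finset (Fin m) := {j | i ≤ (j : ℕ) ∧ (j : ℕ) < i + k}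
  set B : Finset (Fin m) := {j | (j : ℕ) + 1 = i}
  have hA : #A = k := Fin.card_filter_le_val_lt_add h
  have hAB : Disjoint A B := by
    rw [disjoint_filter]; omega
  have hcount := card_boolFun_prescribed t hAB (hA ▸ hk)
  rw [hA, Fintype.card_fin] at hcount
  rw [← hcount]
  congr 1
  ext w
  simp [A, B, IsRunStart, h]

theorem card_isRunStart_zero {m k t : ℕ} (hkm : k ≤ m) (hk : k ≤ t) :
    #{w : Fin m → Bool | #{j | w j = true} = t ∧ IsRunStart m k 0 w} =
      (m - k).choose (t - k) := by
  simpa using card_isRunStart (i := 0) (by omega) hk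

theorem card_isRunStart_succ {m k i t : ℕ} (h : i + 1 + k ≤ m) (hk : k ≤ t) :
    #{w : Fin m → Bool | #{j | w j = true} = t ∧ IsRunStart m k (i + 1) w} =
      (m - k - 1).choose (t - k) := by
  have hguard : #{j : Fin m | (j : ℕ) + 1 = i + 1} = 1 :=
    card_eq_one.2 ⟨⟨i, by omega⟩, by ext; simp [Fin.ext_iff]⟩
  rw [card_isRunStart h hk, hguard, Nat.sub_right_comm]

theorem sum_runsAtLeast {m k t : ℕ} (hk : 1 ≤ k) (hkm : k ≤ m) (hkt : k ≤ t) :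
    ∑ w : Fin m → Bool with #{j | w j = true} = t, runsAtLeast m k w =
      (m - t + 1) * (m - k).choose (t - k) := by
  set Ω : Finset (Fin m → Bool) := {w | #{j | w j = true} = t}
  set c : ℕ → ℕ := fun i => #{w ∈ Ω | IsRunStart m k i w}
  have hswap : ∑ w ∈ Ω, runsAtLeast m k w = ∑ i ∈ range m, c i := by
    simp only [runsAtLeast_eq_card_isRunStart]
    exact (sum_card_bipartiteAbove_eq_sum_card_bipartiteBelow _).trans
      (Fin.sum_univ_eq_sum_range c m)
  have htail : ∀ i ∈ range (k - 1), c (m - k + 1 + i) = 0 := fun i _ =>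
    card_eq_zero.2 (filter_false_of_mem fun w _ hw => by have := hw.1; omega)
  have hfirst : c 0 = (m - k).choose (t - k) := by
    rw [← card_isRunStart_zero hkm hkt]
    simp only [c, Ω, filter_filter]
  have hsucc : ∀ i ∈ range (m - k), c (i + 1) = (m - k - 1).choose (t - k) := fun i hi => by
    rw [← card_isRunStart_succ (i := i) (by simp at hi; omega) hkt]
    simp only [c, Ω, filter_filter]
  calc ∑ w ∈ Ω, runsAtLeast m k w
      = ∑ i ∈ range (m - k + 1 + (k - 1)), c i := by rw [hswap]; congr; omega
    _ = (m - k) * (m - k - 1).choose (t - k) + (m - k).choose (t - k) := by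
      rw [sum_range_add, sum_eq_zero htail, sum_range_succ', sum_congr rfl hsucc, hfirst]
      simp
    _ = (m - t + 1) * (m - k).choose (t - k) := by
      rw [Nat.mul_choose_sub_one, Nat.sub_sub_sub_cancel_right hkt]
      ring

theorem runs_expectation_general (m₁ m₂ m k : ℕ) (hm : m = m₁ + m₂)
    (hk1 : 1 ≤ k) (hk2 : k ≤ m₁)
    (Ω : Finset (Fin m → Bool))
    (hΩ : Ω = Finset.univ.filter
      (fun w => (Finset.univ.filter (fun i => w i = true)).card = m₁)) :
    (∑ w ∈ Ω, (runsAtLeast m k w : ℝ)) / (Ω.card : ℝ) =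
      ((m₂ + 1) * m₁.descFactorial k : ℝ) / (m.descFactorial k : ℝ) := by
  subst hΩ
  have hcard : #{w : Fin m → Bool | #{j | w j = true} = m₁} = m.choose m₁ := by
    simpa using card_boolFun_prescribed (ι := Fin m) m₁ (disjoint_empty_left ∅) (by simp)
  have hdesc : m.descFactorial k ≠ 0 := by
    rw [Ne, Nat.descFactorial_eq_zero_iff_lt]; omega
  have hchoose : m.choose m₁ ≠ 0 := (Nat.choose_pos (by omega)).ne'
  have hratio : ((m - k).choose (m₁ - k) * m.descFactorial k : ℝ) =
      m.choose m₁ * m₁.descFactorial k := by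
    exact_mod_cast Nat.choose_sub_mul_descFactorial hk2
  rw [← Nat.cast_sum, sum_runsAtLeast hk1 (by omega) hk2, hcard, show m - m₁ = m₂ by omega,
    div_eq_div_iff (by exact_mod_cast hchoose) (by exact_mod_cast hdesc)]
  push_cast
  linear_combination ((m₂ : ℝ) + 1) * hratio

/-- Mood's expectation formula for runs (Lemma `LemmaDistributionTheory`):
under the uniform distribution on binary strings of length `m = m₁ + m₂` with
exactly `m₁` symbols `a` (`true`), the expected number of runs of `a`'s of
length at least `k` equals `(m₂+1)·m₁^(k) / m^(k)` (falling factorials). -/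
theorem runs_expectation (m₁ m₂ m k : ℕ) (hm₁ : 1 ≤ m₁) (hm : m = m₁ + m₂)
    (hk1 : 1 ≤ k) (hk2 : k ≤ m₁)
    (Ω : Finset (Fin m → Bool))
    (hΩ : Ω = Finset.univ.filter
      (fun w => (Finset.univ.filter (fun i => w i = true)).card = m₁)) :
    (∑ w ∈ Ω, (runsAtLeast m k w : ℝ)) / (Ω.card : ℝ) =
      ((m₂ + 1) * m₁.descFactorial k : ℝ) / (m.descFactorial k : ℝ) :=
  runs_expectation_general m₁ m₂ m k hm hk1 hk2 Ω hΩ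
end

section
/- For all natural numbers n, m, k with m ≤ n, (n−m)^{(2k)} · (n^{(k)})² ≤ ((n−m)^{(k)})² · n^{(2k)}, where a^{(j)} denotes the falling factorial a·(a−1)···(a−j+1) with a^{(0)} = 1 (and a^{(j)} = 0 if j > a). -/
lemma termwise (n m k i : ℕ) :
    (n - m - k - i) * (n - i) ≤ (n - m - i) * (n - k - i) := by
  rcases le_or_gt n (m + k + i) with h | h
  · have h0 : n - m - k - i = 0 := by omega
    simp [h0]
  · obtain ⟨d, hd⟩ : ∃ d, n = m + k + i + d := ⟨n - (m+k+i), by omega⟩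
    have e1 : n - m - k - i = d := by omega
    have e2 : n - i = m + k + d := by omega
    have e3 : n - m - i = k + d := by omega
    have e4 : n - k - i = m + d := by omega
    rw [e1, e2, e3, e4]
    nlinarith

/-- Second falling-factorial inequality in the proof of Lemma `LemmaOneStep`
(stated there as `(n−m)^(2k)/n^(2k) ≤ ((n−m)^(k)/n^(k))²`), in cleared-denominator
form. -/
theorem descFactorial_ratio_sq (n m k : ℕ) (hm : m ≤ n) :
    (n - m).descFactorial (2 * k) * (n.descFactorial k) ^ 2 ≤
      ((n - m).descFactorial k) ^ 2 * n.descFactorial (2 * k) := by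
  simp only [Nat.descFactorial_eq_prod_range, two_mul, Finset.prod_range_add, sq]
  have key : (∏ i ∈ Finset.range k, (n - m - k - i)) * ∏ i ∈ Finset.range k, (n - i) ≤
      (∏ i ∈ Finset.range k, (n - m - i)) * ∏ i ∈ Finset.range k, (n - k - i) := by
    rw [← Finset.prod_mul_distrib, ← Finset.prod_mul_distrib]
    exact Finset.prod_le_prod (fun i _ => Nat.zero_le _) (fun i _ => termwise n m k i)
  have hsub1 : ∀ i, n - m - (k + i) = n - m - k - i := fun i => by omega
  have hsub2 : ∀ i, n - (k + i) = n - k - i := fun i => by omega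
  simp only [hsub1, hsub2]
  calc (∏ i ∈ Finset.range k, (n - m - i)) * (∏ i ∈ Finset.range k, (n - m - k - i)) *
        ((∏ i ∈ Finset.range k, (n - i)) * ∏ i ∈ Finset.range k, (n - i))
      = ((∏ i ∈ Finset.range k, (n - m - i)) * ∏ i ∈ Finset.range k, (n - i)) *
        ((∏ i ∈ Finset.range k, (n - m - k - i)) * ∏ i ∈ Finset.range k, (n - i)) := by ring
    _ ≤ ((∏ i ∈ Finset.range k, (n - m - i)) * ∏ i ∈ Finset.range k, (n - i)) *
        ((∏ i ∈ Finset.range k, (n - m - i)) * ∏ i ∈ Finset.range k, (n - k - i)) :=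
        Nat.mul_le_mul_left _ key
    _ = (∏ i ∈ Finset.range k, (n - m - i)) * (∏ i ∈ Finset.range k, (n - m - i)) *
        ((∏ i ∈ Finset.range k, (n - i)) * ∏ i ∈ Finset.range k, (n - k - i)) := by ring
end

section
/- Define log* : ℝ → ℕ by log* x = 0 if x ≤ 1 and log* x = 1 + log*(log x) if x > 1, where log is the natural logarithm, and define the iterated exponential e↑↑ : ℕ → ℝ by e↑↑0 = 1 and e↑↑(n+1) = exp(e↑↑n). For every real ψ ≥ 1 there exists a natural number T₀ such that for every natural number T ≥ T₀ the following holds: setting M := ψ·T·e^T and defining X : ℕ → ℝ by X(1) = M and X(i+1) = M·exp(X(i)) for i ≥ 1, one has X(i) ≤ e↑↑(3T) for every natural number i with 1 ≤ i ≤ T + 1. -/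
/-- The iterated logarithm `log*`: the least number of times the natural
logarithm must be applied to bring `x` to a value `≤ 1`; it satisfies
`log* x = 0` if `x ≤ 1` and `log* x = 1 + log* (log x)` if `x > 1`. -/
noncomputable def logStar (x : ℝ) : ℕ := sInf {n : ℕ | Real.log^[n] x ≤ 1}

/-- The iterated exponential `e↑↑n`: `e↑↑0 = 1`, `e↑↑(n+1) = exp (e↑↑n)`. -/
noncomputable def eTower : ℕ → ℝ
  | 0 => 1
  | n + 1 => Real.exp (eTower n)

lemma self_le_exp' (x : ℝ) : x ≤ Real.exp x := by
  linarith [Real.add_one_le_exp x]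

lemma two_mul_le_exp' {x : ℝ} (hx : 0 ≤ x) : 2 * x ≤ Real.exp x := by
  rcases le_or_gt x 1 with h | h
  · linarith [Real.add_one_le_exp x]
  · have h1 : x - 1 + 1 ≤ Real.exp (x - 1) := Real.add_one_le_exp (x - 1)
    have h2 : (2.7182818283 : ℝ) < Real.exp 1 := Real.exp_one_gt_d9
    have h3 : Real.exp x = Real.exp 1 * Real.exp (x - 1) := by
      rw [← Real.exp_add]; ring_nf
    nlinarith [Real.exp_pos (x - 1)]

lemma eTower_one_le (n : ℕ) : 1 ≤ eTower n := by
  induction n with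
  | zero => simp [eTower]
  | succ n ih =>
    show (1 : ℝ) ≤ Real.exp (eTower n)
    calc (1:ℝ) ≤ eTower n := ih
    _ ≤ Real.exp (eTower n) := self_le_exp' _

lemma eTower_mono : Monotone eTower := by
  apply monotone_nat_of_le_succ
  intro n
  show eTower n ≤ Real.exp (eTower n)
  exact self_le_exp' _

lemma two_pow_le_eTower (n : ℕ) : (2 : ℝ) ^ n ≤ eTower n := by
  induction n with
  | zero => simp [eTower]
  | succ n ih =>
    show (2:ℝ) ^ (n+1) ≤ Real.exp (eTower n)
    have h0 : (0:ℝ) ≤ eTower n := le_trans zero_le_one (eTower_one_le n)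
    calc (2:ℝ) ^ (n+1) = 2 * 2 ^ n := by ring
    _ ≤ 2 * eTower n := by nlinarith
    _ ≤ Real.exp (eTower n) := two_mul_le_exp' h0

lemma three_mul_le_two_pow (k : ℕ) : 3 * (k + 10) ≤ 2 ^ (k + 7) := by
  induction k with
  | zero => norm_num
  | succ n ih =>
    have h3 : 3 ≤ 2 ^ (n + 7) := le_trans (show 3 ≤ 2^7 by norm_num) (Nat.pow_le_pow_right (by norm_num) (by omega))
    calc 3 * (n + 1 + 10) = 3 * (n + 10) + 3 := by ring
    _ ≤ 2 ^ (n + 7) + 2 ^ (n + 7) := by omega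
    _ = 2 ^ (n + 8) := by ring

/-- Lemma `LemmaHelperPowerTower`: for every `ψ ≥ 1` and all sufficiently large
`T`, setting `M = ψ·T·e^T` and iterating `X(1) = M`, `X(i+1) = M·exp(X(i))`,
the resulting power tower satisfies `X(i) ≤ e↑↑(3T)` for all `1 ≤ i ≤ T+1`. -/
theorem power_tower_bound (ψ : ℝ) (hψ : 1 ≤ ψ) :
    ∃ T₀ : ℕ, ∀ T : ℕ, T₀ ≤ T →
      ∀ X : ℕ → ℝ,
        X 1 = ψ * T * Real.exp T →
        (∀ i : ℕ, 1 ≤ i → X (i + 1) = ψ * T * Real.exp T * Real.exp (X i)) →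
        ∀ i : ℕ, 1 ≤ i → i ≤ T + 1 → X i ≤ eTower (3 * T) := by
  refine ⟨max 10 (Nat.ceil ψ), ?_⟩
  intro T hT X hX1 hXrec
  have hT10 : 10 ≤ T := le_trans (le_max_left _ _) hT
  have hψT : ψ ≤ (T : ℝ) := by
    calc ψ ≤ (Nat.ceil ψ : ℝ) := Nat.le_ceil ψ
    _ ≤ (T : ℝ) := by exact_mod_cast le_trans (le_max_right _ _) hT
  have hTpos : (0:ℝ) < T := by positivity
  -- main bound on M
  have hM : ψ * T * Real.exp T ≤ eTower (T - 2) := by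
    have h1 : ψ * T * Real.exp T ≤ Real.exp ψ * Real.exp T * Real.exp T := by
      have hψe : ψ ≤ Real.exp ψ := self_le_exp' ψ
      have hTe : (T:ℝ) ≤ Real.exp T := self_le_exp' T
      exact mul_le_mul (mul_le_mul hψe hTe hTpos.le (Real.exp_pos ψ).le)
        (le_refl (Real.exp (T:ℝ))) (Real.exp_pos _).le (by positivity)
    have h2 : Real.exp ψ * Real.exp T * Real.exp T = Real.exp (ψ + T + T) := by
      rw [← Real.exp_add, ← Real.exp_add]
    have h3 : ψ + T + T ≤ 3 * (T:ℝ) := by linarith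
    have h4 : (3 * T : ℝ) ≤ (2:ℝ) ^ (T - 3) := by
      have hnat : 3 * T ≤ 2 ^ (T - 3) := by
        obtain ⟨k, rfl⟩ : ∃ k, T = k + 10 := ⟨T - 10, by omega⟩
        have := three_mul_le_two_pow k
        have : k + 10 - 3 = k + 7 := by omega
        rw [this]
        exact three_mul_le_two_pow k
      calc (3 * T : ℝ) = ((3 * T : ℕ) : ℝ) := by push_cast; ring
      _ ≤ ((2 ^ (T - 3) : ℕ) : ℝ) := by exact_mod_cast hnat
      _ = (2:ℝ) ^ (T - 3) := by push_cast; ring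
    have h5 : ψ + T + T ≤ eTower (T - 3) := by
      calc ψ + T + T ≤ 3 * (T:ℝ) := h3
      _ ≤ (2:ℝ) ^ (T - 3) := h4
      _ ≤ eTower (T - 3) := two_pow_le_eTower _
    have h6 : T - 3 + 1 = T - 2 := by omega
    calc ψ * T * Real.exp T ≤ Real.exp (ψ + T + T) := by rw [← h2]; exact h1
    _ ≤ Real.exp (eTower (T - 3)) := Real.exp_le_exp.2 h5
    _ = eTower (T - 3 + 1) := rfl
    _ = eTower (T - 2) := by rw [h6]
  -- inductive claim
  have claim : ∀ i : ℕ, 1 ≤ i → X i ≤ eTower (2 * i + (T - 2)) := by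
    intro i
    induction i with
    | zero => omega
    | succ n ih =>
      intro _
      rcases Nat.eq_zero_or_pos n with hn | hn
      · subst hn
        rw [hX1]
        exact hM.trans (eTower_mono (by omega))
      · set y := eTower (2 * n + (T - 2)) with hy
        have hy1 : (1:ℝ) ≤ y := eTower_one_le _
        have hXn : X n ≤ y := ih hn
        have hMy : ψ * T * Real.exp T ≤ y := hM.trans (eTower_mono (by omega))
        have hstep : X (n + 1) ≤ y * Real.exp y := by
          rw [hXrec n hn]
          have hMpos : 0 < ψ * T * Real.exp T := by positivity
          exact mul_le_mul hMy (Real.exp_le_exp.2 hXn) (Real.exp_pos _).le (by linarith)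
        have h2y : y * Real.exp y ≤ Real.exp (Real.exp y) := by
          calc y * Real.exp y ≤ Real.exp y * Real.exp y := by
                exact mul_le_mul_of_nonneg_right (self_le_exp' y) (Real.exp_pos _).le
          _ = Real.exp (y + y) := by rw [← Real.exp_add]
          _ ≤ Real.exp (Real.exp y) := Real.exp_le_exp.2 (by
                have := two_mul_le_exp' (le_trans zero_le_one hy1)
                linarith)
        have hidx : 2 * (n + 1) + (T - 2) = (2 * n + (T - 2)) + 1 + 1 := by omega
        calc X (n + 1) ≤ Real.exp (Real.exp y) := hstep.trans h2y
        _ = eTower ((2 * n + (T - 2)) + 1 + 1) := rfl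
        _ = eTower (2 * (n + 1) + (T - 2)) := by rw [hidx]
  intro i h1 h2
  exact (claim i h1).trans (eTower_mono (by omega))
end
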